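/- arXiv:2502.18237 — 7 statements merged into one kernel-verified Lean document; each statement's English description precedes it below -/
import Mathlib

section
/- General soundness of the CP resolution rule: let w_1,…,w_n > 0 and w'_1,…,w'_m < 0 be real coefficients, φ_1,…,φ_n and φ'_1,…,φ'_m real numbers, and P, P' propositions. If there exists t ∈ ℝ such that ((∃ k, w_k*t + φ_k ≥ 0) ∨ P) and ((∃ j, w'_j*t + φ'_j ≥ 0) ∨ P') both hold, then (∃ j k, φ_k/w_k - φ'_j/w'_j ≥ 0) ∨ P ∨ P' holds. -/
/-- General soundness of the CP resolution rule. -/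
theorem stmt_2 (n m : ℕ) (hn : 1 ≤ n) (hm : 1 ≤ m)
    (w : Fin n → ℝ) (w' : Fin m → ℝ) (φ : Fin n → ℝ) (φ' : Fin m → ℝ)
    (hw : ∀ k, 0 < w k) (hw' : ∀ j, w' j < 0) (P P' : Prop)
    (h : ∃ t : ℝ, ((∃ k, w k * t + φ k ≥ 0) ∨ P) ∧ ((∃ j, w' j * t + φ' j ≥ 0) ∨ P')) :
    (∃ j k, φ k / w k - φ' j / w' j ≥ 0) ∨ P ∨ P' := by
  obtain ⟨t, h1, h2⟩ := h
  rcases h1 with ⟨k, hk⟩ | hP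
  · rcases h2 with ⟨j, hj⟩ | hP'
    · left
      refine ⟨j, k, ?_⟩
      have a1 : -t ≤ φ k / w k := by
        rw [le_div_iff₀ (hw k)]; nlinarith
      have a2 : φ' j / w' j ≤ -t := by
        rw [div_le_iff_of_neg (hw' j)]; nlinarith
      linarith
    · exact Or.inr (Or.inr hP')
  · exact Or.inr (Or.inl hP)
end

section
/- Single-variable DRL satisfies the constraints: let Π be a finite satisfiable set of constraints in a single variable x (each constraint a finite disjunction of inequalities w*x + φ ≥ 0 with w ≠ 0). For any input t ∈ ℝ, define DRL(t) = t if t satisfies all constraints in Π; otherwise DRL(t) is whichever of the closest satisfying left boundary L(t) = max{l^Ψ : Ψ ∈ Π, t > l^Ψ, l^Ψ satisfies Π} and closest satisfying right boundary R(t) = min{r^Ψ : Ψ ∈ Π, t < r^Ψ, r^Ψ satisfies Π} is nearer to t (right boundary on ties). Then DRL(t) satisfies every constraint in Π. -/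
open scoped Classical

namespace SingleVarDRL

/-- A finite set of constraints in a single real variable: constraint `i` (for `i : Fin n`)
is the disjunction of the `m i ≥ 1` inequalities `w i j * x + φ i j ≥ 0`, each with
`w i j ≠ 0`. -/
structure SVProblem where
  n : ℕ
  m : Fin n → ℕ
  hm : ∀ i, 1 ≤ m i
  w : ∀ i : Fin n, Fin (m i) → ℝ
  φ : ∀ i : Fin n, Fin (m i) → ℝ
  hw : ∀ i j, w i j ≠ 0

/-- `t` satisfies all constraints in the set. -/
def SVProblem.Sat (P : SVProblem) (t : ℝ) : Prop :=
  ∀ i, ∃ j, P.w i j * t + P.φ i j ≥ 0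

/-- Left boundary `l^Ψ` of constraint `i`: the max of `-φ/w` over negative-coefficient
disjuncts (`-∞` if there are none). -/
noncomputable def SVProblem.lB (P : SVProblem) (i : Fin P.n) : EReal :=
  ⨆ j : {j : Fin (P.m i) // P.w i j < 0}, ((-P.φ i j.1 / P.w i j.1 : ℝ) : EReal)

/-- Right boundary `r^Ψ` of constraint `i`: the min of `-φ/w` over positive-coefficient
disjuncts (`+∞` if there are none). -/
noncomputable def SVProblem.rB (P : SVProblem) (i : Fin P.n) : EReal :=
  ⨅ j : {j : Fin (P.m i) // 0 < P.w i j}, ((-P.φ i j.1 / P.w i j.1 : ℝ) : EReal)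

/-- Closest satisfying left boundary for `t`: the max over constraints `Ψ` of those left
boundaries `l^Ψ` that are (finite reals) smaller than `t` and satisfy the whole set. -/
noncomputable def SVProblem.L (P : SVProblem) (t : ℝ) : EReal :=
  sSup {v : EReal | ∃ i : Fin P.n, ∃ x : ℝ, (x : EReal) = P.lB i ∧ x < t ∧ P.Sat x ∧ v = (x : EReal)}

/-- Closest satisfying right boundary for `t`. -/
noncomputable def SVProblem.R (P : SVProblem) (t : ℝ) : EReal :=
  sInf {v : EReal | ∃ i : Fin P.n, ∃ x : ℝ, (x : EReal) = P.rB i ∧ t < x ∧ P.Sat x ∧ v = (x : EReal)}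

/-- The single-variable Disjunctive Refinement Layer: `t` itself if it satisfies the
constraints, otherwise whichever of the closest satisfying left/right boundaries is
nearer to `t` (the right boundary on ties). -/
noncomputable def SVProblem.DRL (P : SVProblem) (t : ℝ) : ℝ :=
  if P.Sat t then t
  else if (t : EReal) - P.L t < P.R t - (t : EReal) then (P.L t).toReal
  else (P.R t).toReal

variable (P : SVProblem)

lemma SVProblem.lB_attained (i : Fin P.n) [Nonempty {j : Fin (P.m i) // P.w i j < 0}] :
    ∃ j : {j : Fin (P.m i) // P.w i j < 0},
      P.lB i = ((-P.φ i j.1 / P.w i j.1 : ℝ) : EReal) := by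
  obtain ⟨j, hj⟩ := Finite.exists_max (fun j : {j : Fin (P.m i) // P.w i j < 0} =>
    ((-P.φ i j.1 / P.w i j.1 : ℝ) : EReal))
  refine ⟨j, ?_⟩
  rw [SVProblem.lB]
  exact le_antisymm (iSup_le hj) (le_iSup (fun j : {j : Fin (P.m i) // P.w i j < 0} => ((-P.φ i j.1 / P.w i j.1 : ℝ) : EReal)) j)

lemma SVProblem.rB_attained (i : Fin P.n) [Nonempty {j : Fin (P.m i) // 0 < P.w i j}] :
    ∃ j : {j : Fin (P.m i) // 0 < P.w i j},
      P.rB i = ((-P.φ i j.1 / P.w i j.1 : ℝ) : EReal) := by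
  obtain ⟨j, hj⟩ := Finite.exists_min (fun j : {j : Fin (P.m i) // 0 < P.w i j} =>
    ((-P.φ i j.1 / P.w i j.1 : ℝ) : EReal))
  refine ⟨j, ?_⟩
  rw [SVProblem.rB]
  exact le_antisymm (iInf_le (fun j : {j : Fin (P.m i) // 0 < P.w i j} => ((-P.φ i j.1 / P.w i j.1 : ℝ) : EReal)) j) (le_iInf hj)

lemma SVProblem.le_lB_iff (i : Fin P.n) (x : ℝ) :
    (x : EReal) ≤ P.lB i ↔ ∃ j, P.w i j < 0 ∧ x ≤ -P.φ i j / P.w i j := by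
  constructor
  · intro h
    by_cases hne : Nonempty {j : Fin (P.m i) // P.w i j < 0}
    · obtain ⟨j, heq⟩ := P.lB_attained i
      rw [heq] at h
      exact ⟨j.1, j.2, by exact_mod_cast h⟩
    · haveI := not_nonempty_iff.mp hne
      rw [SVProblem.lB, iSup_of_empty] at h
      exact absurd (le_bot_iff.mp h) (EReal.coe_ne_bot x)
  · rintro ⟨j, hj, hx⟩
    calc (x : EReal) ≤ ((-P.φ i j / P.w i j : ℝ) : EReal) := by exact_mod_cast hx
      _ ≤ P.lB i := by
          rw [SVProblem.lB]
          exact le_iSup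
            (fun j : {j : Fin (P.m i) // P.w i j < 0} => ((-P.φ i j.1 / P.w i j.1 : ℝ) : EReal))
            ⟨j, hj⟩

lemma SVProblem.rB_le_iff (i : Fin P.n) (x : ℝ) :
    P.rB i ≤ (x : EReal) ↔ ∃ j, 0 < P.w i j ∧ -P.φ i j / P.w i j ≤ x := by
  constructor
  · intro h
    by_cases hne : Nonempty {j : Fin (P.m i) // 0 < P.w i j}
    · obtain ⟨j, heq⟩ := P.rB_attained i
      rw [heq] at h
      exact ⟨j.1, j.2, by exact_mod_cast h⟩
    · haveI := not_nonempty_iff.mp hne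
      rw [SVProblem.rB, iInf_of_empty] at h
      exact absurd (top_le_iff.mp h) (EReal.coe_ne_top x)
  · rintro ⟨j, hj, hx⟩
    calc P.rB i ≤ ((-P.φ i j / P.w i j : ℝ) : EReal) := by
          rw [SVProblem.rB]
          exact iInf_le
            (fun j : {j : Fin (P.m i) // 0 < P.w i j} => ((-P.φ i j.1 / P.w i j.1 : ℝ) : EReal))
            ⟨j, hj⟩
      _ ≤ (x : EReal) := by exact_mod_cast hx

lemma SVProblem.sat_one_iff (i : Fin P.n) (x : ℝ) :
    (∃ j, P.w i j * x + P.φ i j ≥ 0) ↔ ((x : EReal) ≤ P.lB i ∨ P.rB i ≤ (x : EReal)) := by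
  constructor
  · rintro ⟨j, hj⟩
    rcases (P.hw i j).lt_or_gt with hneg | hpos
    · left
      rw [P.le_lB_iff]
      refine ⟨j, hneg, ?_⟩
      rw [le_div_iff_of_neg hneg]
      nlinarith
    · right
      rw [P.rB_le_iff]
      refine ⟨j, hpos, ?_⟩
      rw [div_le_iff₀ hpos]
      nlinarith
  · rintro (h | h)
    · obtain ⟨j, hneg, hx⟩ := (P.le_lB_iff i x).mp h
      refine ⟨j, ?_⟩
      rw [le_div_iff_of_neg hneg] at hx
      nlinarith
    · obtain ⟨j, hpos, hx⟩ := (P.rB_le_iff i x).mp h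
      refine ⟨j, ?_⟩
      rw [div_le_iff₀ hpos] at hx
      nlinarith

lemma SVProblem.lB_ne_top (i : Fin P.n) : P.lB i ≠ ⊤ := by
  by_cases hne : Nonempty {j : Fin (P.m i) // P.w i j < 0}
  · obtain ⟨j, heq⟩ := P.lB_attained i
    rw [heq]; exact EReal.coe_ne_top _
  · haveI := not_nonempty_iff.mp hne
    rw [SVProblem.lB, iSup_of_empty]
    simp

lemma SVProblem.rB_ne_bot (i : Fin P.n) : P.rB i ≠ ⊥ := by
  by_cases hne : Nonempty {j : Fin (P.m i) // 0 < P.w i j}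
  · obtain ⟨j, heq⟩ := P.rB_attained i
    rw [heq]; exact EReal.coe_ne_bot _
  · haveI := not_nonempty_iff.mp hne
    rw [SVProblem.rB, iInf_of_empty]
    simp

lemma SVProblem.isClosed_sat : IsClosed {x : ℝ | P.Sat x} := by
  have : {x : ℝ | P.Sat x} = ⋂ i, ⋃ j, {x : ℝ | 0 ≤ P.w i j * x + P.φ i j} := by
    ext x
    simp [SVProblem.Sat, ge_iff_le]
  rw [this]
  exact isClosed_iInter fun i => isClosed_iUnion_of_finite fun j =>
    isClosed_le continuous_const (by continuity)

lemma SVProblem.exists_left {t : ℝ} (ht : ¬ P.Sat t) {s : ℝ} (hs : P.Sat s) (hst : s < t) :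
    ∃ i : Fin P.n, ∃ x : ℝ, (x : EReal) = P.lB i ∧ x < t ∧ P.Sat x := by
  have hn : Nonempty (Fin P.n) := by
    by_contra h
    exact ht fun i => ((not_nonempty_iff.mp h).false i).elim
  set K := Set.Icc s t ∩ {x : ℝ | P.Sat x} with hK
  have hKc : IsCompact K := isCompact_Icc.inter_right P.isClosed_sat
  have hKne : K.Nonempty := ⟨s, ⟨le_refl s, hst.le⟩, hs⟩
  obtain ⟨⟨hsx, hxt⟩, hxsat⟩ := hKc.sSup_mem hKne
  set x := sSup K with hxdef
  have hxlt : x < t := lt_of_le_of_ne hxt (fun h => ht (h ▸ hxsat))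
  by_cases hex : ∃ i, (x : EReal) = P.lB i
  · obtain ⟨i, hi⟩ := hex
    exact ⟨i, x, hi, hxlt, hxsat⟩
  exfalso
  push_neg at hex
  have hdi' : ∀ i, (x : EReal) < P.lB i ∨ P.rB i ≤ (x : EReal) := by
    intro i
    rcases (P.sat_one_iff i x).mp (hxsat i) with h | h
    · exact Or.inl (lt_of_le_of_ne h (hex i))
    · exact Or.inr h
  set b : Fin P.n → ℝ := fun i => if (x : EReal) < P.lB i then (P.lB i).toReal else t with hb
  have hcoe : ∀ i, (x : EReal) < P.lB i → ((P.lB i).toReal : EReal) = P.lB i := by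
    intro i h
    exact EReal.coe_toReal (P.lB_ne_top i) (fun hbot => by simp [hbot] at h)
  have hxb : ∀ i, x < b i := by
    intro i
    by_cases h : (x : EReal) < P.lB i
    · rw [hb]; simp only [if_pos h]
      rw [← EReal.coe_lt_coe_iff, hcoe i h]
      exact h
    · rw [hb]; simp only [if_neg h]
      exact hxlt
  set c := Finset.univ.inf' Finset.univ_nonempty b with hc
  have hxc : x < min c t := lt_min ((Finset.lt_inf'_iff _).mpr fun i _ => hxb i) hxlt
  set y := (x + min c t) / 2 with hy
  have hxy : x < y := by rw [hy]; linarith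
  have hyc : y < min c t := by rw [hy]; linarith
  have hyt : y ≤ t := le_of_lt (lt_of_lt_of_le hyc (min_le_right _ _))
  have hysat : P.Sat y := by
    intro i
    rw [P.sat_one_iff i y]
    rcases hdi' i with h | h
    · left
      have hbi : b i = (P.lB i).toReal := by rw [hb]; simp only [if_pos h]
      have hlt2 : y < (P.lB i).toReal := by
        calc y < min c t := hyc
          _ ≤ c := min_le_left _ _
          _ ≤ b i := Finset.inf'_le _ (Finset.mem_univ i)
          _ = _ := hbi
      exact ((EReal.coe_lt_coe_iff.mpr hlt2).trans_le (le_of_eq (hcoe i h))).le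
    · right
      exact h.trans (by exact_mod_cast hxy.le)
  have hyK : y ∈ K := ⟨⟨hsx.trans hxy.le, hyt⟩, hysat⟩
  have : y ≤ x := le_csSup hKc.bddAbove hyK
  linarith

lemma SVProblem.exists_right {t : ℝ} (ht : ¬ P.Sat t) {s : ℝ} (hs : P.Sat s) (hst : t < s) :
    ∃ i : Fin P.n, ∃ x : ℝ, (x : EReal) = P.rB i ∧ t < x ∧ P.Sat x := by
  have hn : Nonempty (Fin P.n) := by
    by_contra h
    exact ht fun i => ((not_nonempty_iff.mp h).false i).elim
  set K := Set.Icc t s ∩ {x : ℝ | P.Sat x} with hK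
  have hKc : IsCompact K := isCompact_Icc.inter_right P.isClosed_sat
  have hKne : K.Nonempty := ⟨s, ⟨hst.le, le_refl s⟩, hs⟩
  obtain ⟨⟨htx, hxs⟩, hxsat⟩ := hKc.sInf_mem hKne
  set x := sInf K with hxdef
  have hxgt : t < x := lt_of_le_of_ne htx (fun h => ht (h ▸ hxsat))
  by_cases hex : ∃ i, (x : EReal) = P.rB i
  · obtain ⟨i, hi⟩ := hex
    exact ⟨i, x, hi, hxgt, hxsat⟩
  exfalso
  push_neg at hex
  have hdi' : ∀ i, (x : EReal) ≤ P.lB i ∨ P.rB i < (x : EReal) := by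
    intro i
    rcases (P.sat_one_iff i x).mp (hxsat i) with h | h
    · exact Or.inl h
    · exact Or.inr (lt_of_le_of_ne h (fun e => hex i e.symm))
  set b : Fin P.n → ℝ := fun i => if P.rB i < (x : EReal) then (P.rB i).toReal else t with hb
  have hcoe : ∀ i, P.rB i < (x : EReal) → ((P.rB i).toReal : EReal) = P.rB i := by
    intro i h
    exact EReal.coe_toReal (fun htop => by simp [htop] at h) (P.rB_ne_bot i)
  have hxb : ∀ i, b i < x := by
    intro i
    by_cases h : P.rB i < (x : EReal)
    · rw [hb]; simp only [if_pos h]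
      rw [← EReal.coe_lt_coe_iff, hcoe i h]
      exact h
    · rw [hb]; simp only [if_neg h]
      exact hxgt
  set c := Finset.univ.sup' Finset.univ_nonempty b with hc
  have hxc : max c t < x := max_lt ((Finset.sup'_lt_iff _).mpr fun i _ => hxb i) hxgt
  set y := (x + max c t) / 2 with hy
  have hxy : y < x := by rw [hy]; linarith
  have hyc : max c t < y := by rw [hy]; linarith
  have hyt : t ≤ y := le_of_lt (lt_of_le_of_lt (le_max_right _ _) hyc)
  have hysat : P.Sat y := by
    intro i
    rw [P.sat_one_iff i y]
    rcases hdi' i with h | h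
    · left
      exact le_trans (by exact_mod_cast hxy.le) h
    · right
      have hbi : b i = (P.rB i).toReal := by rw [hb]; simp only [if_pos h]
      have hlt2 : (P.rB i).toReal < y := by
        calc (P.rB i).toReal = b i := hbi.symm
          _ ≤ c := Finset.le_sup' _ (Finset.mem_univ i)
          _ ≤ max c t := le_max_left _ _
          _ < y := hyc
      exact (le_of_eq (hcoe i h).symm).trans (EReal.coe_lt_coe_iff.mpr hlt2).le
  have hyK : y ∈ K := ⟨⟨hyt, hxy.le.trans hxs⟩, hysat⟩
  have : x ≤ y := csInf_le hKc.bddBelow hyK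
  linarith


end SingleVarDRL

open SingleVarDRL in
/-- Single-variable DRL satisfies the constraints (Lemma 1, satisfaction part). -/
theorem stmt_7 (P : SVProblem) (hsat : ∃ s, P.Sat s) (t : ℝ) : P.Sat (P.DRL t) := by
  by_cases hts : P.Sat t
  · rw [SVProblem.DRL, if_pos hts]; exact hts
  rw [SVProblem.DRL, if_neg hts]
  set SL := {v : EReal | ∃ i : Fin P.n, ∃ x : ℝ,
    (x : EReal) = P.lB i ∧ x < t ∧ P.Sat x ∧ v = (x : EReal)} with hSL
  set SR := {v : EReal | ∃ i : Fin P.n, ∃ x : ℝ,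
    (x : EReal) = P.rB i ∧ t < x ∧ P.Sat x ∧ v = (x : EReal)} with hSR
  have hLdef : P.L t = sSup SL := rfl
  have hRdef : P.R t = sInf SR := rfl
  have hLfin : SL.Finite := by
    apply (Set.finite_range P.lB).subset
    rintro v ⟨i, x, hx, -, -, rfl⟩
    exact ⟨i, hx.symm⟩
  have hRfin : SR.Finite := by
    apply (Set.finite_range P.rB).subset
    rintro v ⟨i, x, hx, -, -, rfl⟩
    exact ⟨i, hx.symm⟩
  have memL : SL.Nonempty → ∃ x : ℝ, P.L t = (x : EReal) ∧ x < t ∧ P.Sat x := by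
    intro hne
    obtain ⟨i, x, hx, hxt, hxs, hv⟩ := hne.csSup_mem hLfin
    exact ⟨x, by rw [hLdef, hv], hxt, hxs⟩
  have memR : SR.Nonempty → ∃ x : ℝ, P.R t = (x : EReal) ∧ t < x ∧ P.Sat x := by
    intro hne
    obtain ⟨i, x, hx, hxt, hxs, hv⟩ := hne.csInf_mem hRfin
    exact ⟨x, by rw [hRdef, hv], hxt, hxs⟩
  by_cases hlt : (t : EReal) - P.L t < P.R t - (t : EReal)
  · rw [if_pos hlt]
    by_cases hne : SL.Nonempty
    · obtain ⟨x, hLx, hxt, hxs⟩ := memL hne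
      rw [hLx, EReal.toReal_coe]
      exact hxs
    · exfalso
      rw [hLdef, Set.not_nonempty_iff_eq_empty.mp hne, sSup_empty, EReal.coe_sub_bot] at hlt
      exact not_top_lt hlt
  · rw [if_neg hlt]
    by_cases hne : SR.Nonempty
    · obtain ⟨x, hRx, hxt, hxs⟩ := memR hne
      rw [hRx, EReal.toReal_coe]
      exact hxs
    · exfalso
      have hRtop : P.R t = ⊤ := by
        rw [hRdef, Set.not_nonempty_iff_eq_empty.mp hne, sInf_empty]
      rw [hRtop, EReal.top_sub_coe] at hlt
      have h1 : (t : EReal) - P.L t = ⊤ := top_le_iff.mp (not_lt.mp hlt)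
      have hSLe : ¬ SL.Nonempty := by
        intro hne2
        obtain ⟨x, hLx, -, -⟩ := memL hne2
        rw [hLx, ← EReal.coe_sub] at h1
        exact EReal.coe_ne_top _ h1
      obtain ⟨s, hs⟩ := hsat
      rcases lt_trichotomy s t with h | h | h
      · obtain ⟨i, x, hx, hxt, hxs⟩ := P.exists_left hts hs h
        exact hSLe ⟨(x : EReal), i, x, hx, hxt, hxs, rfl⟩
      · exact hts (h ▸ hs)
      · obtain ⟨i, x, hx, hxt, hxs⟩ := P.exists_right hts hs h
        exact hne ⟨(x : EReal), i, x, hx, hxt, hxs, rfl⟩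
end

section
/- Single-variable DRL is optimal: under the setup of the single-variable DRL, for every t ∈ ℝ, DRL(t) satisfies Π and there is no t' satisfying Π with |t - t'| < |t - DRL(t)|. -/
open scoped Classical

namespace SingleVarDRL

/-!
The satisfying set `S` is closed, being a finite intersection of finite unions of closed
half-lines. For `t ∉ S`, the nearest point of `S` below `t` is the left boundary `l^Ψ` of some
constraint `Ψ`: otherwise every constraint would still hold just to the right of it. So `L t`
is that nearest point (or `⊥` if there is none), symmetrically `R t`, and `DRL t` is the nearer
of the two.
-/

open Filter Topology Set

theorem _root_.IsClosed.exists_isGreatest_inter_Iio {α : Type*}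
    [ConditionallyCompleteLinearOrder α] [TopologicalSpace α] [OrderTopology α]
    {S : Set α} {t : α} (hS : IsClosed S) (ht : t ∉ S) (hne : (S ∩ Iio t).Nonempty) :
    ∃ a, IsGreatest (S ∩ Iio t) a := by
  have hIic : S ∩ Iio t = S ∩ Iic t := by
    ext x
    exact and_congr_right fun hx => (ne_of_mem_of_not_mem hx ht).le_iff_lt.symm
  rw [hIic] at hne ⊢
  exact ⟨_, (hS.inter isClosed_Iic).isGreatest_csSup hne ⟨t, fun _ hx => hx.2⟩⟩

theorem _root_.IsClosed.exists_isLeast_inter_Ioi {α : Type*}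
    [ConditionallyCompleteLinearOrder α] [TopologicalSpace α] [OrderTopology α]
    {S : Set α} {t : α} (hS : IsClosed S) (ht : t ∉ S) (hne : (S ∩ Ioi t).Nonempty) :
    ∃ a, IsLeast (S ∩ Ioi t) a :=
  hS.exists_isGreatest_inter_Iio (α := αᵒᵈ) ht hne

namespace SVProblem

variable (P : SVProblem)

theorem coe_le_lB_iff {i : Fin P.n} {x : ℝ} :
    (x : EReal) ≤ P.lB i ↔ ∃ j, P.w i j < 0 ∧ x ≤ -P.φ i j / P.w i j := by
  constructor
  · intro hx
    rcases isEmpty_or_nonempty {j : Fin (P.m i) // P.w i j < 0} with hempty | hne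
    · rw [lB, iSup_of_empty] at hx
      exact absurd (le_bot_iff.1 hx) (EReal.coe_ne_bot x)
    · obtain ⟨j, hj⟩ := exists_eq_ciSup_of_finite
        (f := fun j : {j : Fin (P.m i) // P.w i j < 0} => ((-P.φ i j.1 / P.w i j.1 : ℝ) : EReal))
      exact ⟨j.1, j.2, EReal.coe_le_coe_iff.1 (hx.trans_eq hj.symm)⟩
  · rintro ⟨j, hj, hx⟩
    exact le_iSup_of_le (ι := {j : Fin (P.m i) // P.w i j < 0}) ⟨j, hj⟩ (EReal.coe_le_coe hx)

theorem rB_le_coe_iff {i : Fin P.n} {x : ℝ} :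
    P.rB i ≤ (x : EReal) ↔ ∃ j, 0 < P.w i j ∧ -P.φ i j / P.w i j ≤ x := by
  constructor
  · intro hx
    rcases isEmpty_or_nonempty {j : Fin (P.m i) // 0 < P.w i j} with hempty | hne
    · rw [rB, iInf_of_empty] at hx
      exact absurd (top_le_iff.1 hx) (EReal.coe_ne_top x)
    · obtain ⟨j, hj⟩ := exists_eq_ciInf_of_finite
        (f := fun j : {j : Fin (P.m i) // 0 < P.w i j} => ((-P.φ i j.1 / P.w i j.1 : ℝ) : EReal))
      exact ⟨j.1, j.2, EReal.coe_le_coe_iff.1 (hj.trans_le hx)⟩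
  · rintro ⟨j, hj, hx⟩
    exact iInf_le_of_le (ι := {j : Fin (P.m i) // 0 < P.w i j}) ⟨j, hj⟩ (EReal.coe_le_coe hx)

theorem exists_disjunct_iff {i : Fin P.n} {x : ℝ} :
    (∃ j, P.w i j * x + P.φ i j ≥ 0) ↔ (x : EReal) ≤ P.lB i ∨ P.rB i ≤ x := by
  rw [coe_le_lB_iff, rB_le_coe_iff, ← exists_or]
  refine exists_congr fun j => ⟨fun h => ?_, ?_⟩
  · rcases (P.hw i j).lt_or_gt with hneg | hpos
    · exact .inl ⟨hneg, by rw [le_div_iff_of_neg hneg]; linarith⟩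
    · exact .inr ⟨hpos, by rw [div_le_iff₀ hpos]; linarith⟩
  · rintro (⟨hneg, hx⟩ | ⟨hpos, hx⟩)
    · rw [le_div_iff_of_neg hneg] at hx; linarith
    · rw [div_le_iff₀ hpos] at hx; linarith

theorem sat_iff {x : ℝ} : P.Sat x ↔ ∀ i, (x : EReal) ≤ P.lB i ∨ P.rB i ≤ x :=
  forall_congr' fun _ => P.exists_disjunct_iff

theorem isClosed_setOf_sat : IsClosed {x : ℝ | P.Sat x} := by
  simp only [Sat, ge_iff_le, ofPred_forall, ofPred_exists]
  exact isClosed_iInter fun i => isClosed_iUnion_of_finite fun j =>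
    isClosed_le continuous_const (by fun_prop)

theorem eventually_sat_nhdsGT {a : ℝ} (ha : P.Sat a) (hne : ∀ i, (a : EReal) ≠ P.lB i) :
    ∀ᶠ x in 𝓝[>] a, P.Sat x := by
  simp only [sat_iff] at ha ⊢
  refine eventually_all.2 fun i => ?_
  rcases ha i with h | h
  · have hlt : ∀ᶠ x : ℝ in 𝓝 a, (x : EReal) < P.lB i :=
      continuous_coe_real_ereal.continuousAt.eventually_lt continuousAt_const
        (h.lt_of_ne (hne i))
    filter_upwards [nhdsWithin_le_nhds hlt] with x hx
    exact .inl hx.le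
  · filter_upwards [self_mem_nhdsWithin] with x hx
    exact .inr (h.trans (EReal.coe_le_coe hx.le))

theorem eventually_sat_nhdsLT {a : ℝ} (ha : P.Sat a) (hne : ∀ i, (a : EReal) ≠ P.rB i) :
    ∀ᶠ x in 𝓝[<] a, P.Sat x := by
  simp only [sat_iff] at ha ⊢
  refine eventually_all.2 fun i => ?_
  rcases ha i with h | h
  · filter_upwards [self_mem_nhdsWithin] with x hx
    exact .inl ((EReal.coe_le_coe hx.le).trans h)
  · have hgt : ∀ᶠ x : ℝ in 𝓝 a, P.rB i < (x : EReal) :=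
      continuousAt_const.eventually_lt continuous_coe_real_ereal.continuousAt
        (h.lt_of_ne (hne i).symm)
    filter_upwards [nhdsWithin_le_nhds hgt] with x hx
    exact .inr hx.le

theorem exists_lB_eq_of_isGreatest {a t : ℝ} (h : IsGreatest {x | P.Sat x ∧ x < t} a) :
    ∃ i, (a : EReal) = P.lB i := by
  by_contra! hne
  have hbelow : ∀ᶠ x in 𝓝[>] a, x < t := nhdsWithin_le_nhds (eventually_lt_nhds h.1.2)
  obtain ⟨x, hx, hxt, hax⟩ :=
    ((P.eventually_sat_nhdsGT h.1.1 hne).and (hbelow.and self_mem_nhdsWithin)).exists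
  exact (h.2 ⟨hx, hxt⟩).not_gt hax

theorem exists_rB_eq_of_isLeast {a t : ℝ} (h : IsLeast {x | P.Sat x ∧ t < x} a) :
    ∃ i, (a : EReal) = P.rB i := by
  by_contra! hne
  have habove : ∀ᶠ x in 𝓝[<] a, t < x := nhdsWithin_le_nhds (eventually_gt_nhds h.1.2)
  obtain ⟨x, hx, htx, hxa⟩ :=
    ((P.eventually_sat_nhdsLT h.1.1 hne).and (habove.and self_mem_nhdsWithin)).exists
  exact (h.2 ⟨hx, htx⟩).not_gt hxa

theorem coe_le_L {t t' : ℝ} (ht : ¬ P.Sat t) (ht' : P.Sat t') (hlt : t' < t) :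
    (t' : EReal) ≤ P.L t := by
  obtain ⟨a, ha⟩ := P.isClosed_setOf_sat.exists_isGreatest_inter_Iio ht ⟨t', ht', hlt⟩
  obtain ⟨i, hi⟩ := P.exists_lB_eq_of_isGreatest ha
  refine (EReal.coe_le_coe (ha.2 ⟨ht', hlt⟩)).trans (le_sSup ?_)
  exact ⟨i, a, hi, ha.1.2, ha.1.1, rfl⟩

theorem R_le_coe {t t' : ℝ} (ht : ¬ P.Sat t) (ht' : P.Sat t') (hlt : t < t') :
    P.R t ≤ (t' : EReal) := by
  obtain ⟨a, ha⟩ := P.isClosed_setOf_sat.exists_isLeast_inter_Ioi ht ⟨t', ht', hlt⟩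
  obtain ⟨i, hi⟩ := P.exists_rB_eq_of_isLeast ha
  refine (sInf_le ?_).trans (EReal.coe_le_coe (ha.2 ⟨ht', hlt⟩))
  exact ⟨i, a, hi, ha.1.2, ha.1.1, rfl⟩

theorem exists_L_eq_coe {t : ℝ} (h : P.L t ≠ ⊥) :
    ∃ a : ℝ, P.L t = a ∧ P.Sat a ∧ a < t := by
  set s := {v : EReal | ∃ i, ∃ x : ℝ, (x : EReal) = P.lB i ∧ x < t ∧ P.Sat x ∧ v = x}
  have hfin : s.Finite :=
    (finite_range P.lB).subset (by rintro _ ⟨i, x, hx, -, -, rfl⟩; exact ⟨i, hx.symm⟩)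
  have hne : s.Nonempty := by
    by_contra hs
    exact h (show sSup s = ⊥ by rw [not_nonempty_iff_eq_empty.1 hs, sSup_empty])
  obtain ⟨i, a, -, hat, ha, hL⟩ := hne.csSup_mem hfin
  exact ⟨a, hL, ha, hat⟩

theorem exists_R_eq_coe {t : ℝ} (h : P.R t ≠ ⊤) :
    ∃ b : ℝ, P.R t = b ∧ P.Sat b ∧ t < b := by
  set s := {v : EReal | ∃ i, ∃ x : ℝ, (x : EReal) = P.rB i ∧ t < x ∧ P.Sat x ∧ v = x}
  have hfin : s.Finite :=
    (finite_range P.rB).subset (by rintro _ ⟨i, x, hx, -, -, rfl⟩; exact ⟨i, hx.symm⟩)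
  have hne : s.Nonempty := by
    by_contra hs
    exact h (show sInf s = ⊤ by rw [not_nonempty_iff_eq_empty.1 hs, sInf_empty])
  obtain ⟨i, b, -, htb, hb, hR⟩ := hne.csInf_mem hfin
  exact ⟨b, hR, hb, htb⟩

theorem L_ne_bot_or_R_ne_top {t : ℝ} (hsat : ∃ s, P.Sat s) (ht : ¬ P.Sat t) :
    P.L t ≠ ⊥ ∨ P.R t ≠ ⊤ := by
  obtain ⟨s, hs⟩ := hsat
  rcases (show s ≠ t by rintro rfl; exact ht hs).lt_or_gt with hlt | hgt
  · exact .inl (ne_bot_of_le_ne_bot (EReal.coe_ne_bot s) (P.coe_le_L ht hs hlt))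
  · exact .inr (ne_top_of_le_ne_top (EReal.coe_ne_top s) (P.R_le_coe ht hs hgt))

theorem min_le_abs_sub {t t' : ℝ} (ht : ¬ P.Sat t) (ht' : P.Sat t') :
    min ((t : EReal) - P.L t) (P.R t - t) ≤ ((|t - t'| : ℝ) : EReal) := by
  rcases (show t' ≠ t by rintro rfl; exact ht ht').lt_or_gt with hlt | hgt
  · rw [abs_of_pos (sub_pos.2 hlt), EReal.coe_sub]
    exact min_le_of_left_le (EReal.sub_le_sub le_rfl (P.coe_le_L ht ht' hlt))
  · rw [abs_sub_comm, abs_of_pos (sub_pos.2 hgt), EReal.coe_sub]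
    exact min_le_of_right_le (EReal.sub_le_sub (P.R_le_coe ht ht' hgt) le_rfl)

theorem sat_DRL_and_abs_sub_DRL_le {t : ℝ} (hsat : ∃ s, P.Sat s) (ht : ¬ P.Sat t) :
    P.Sat (P.DRL t) ∧
      ((|t - P.DRL t| : ℝ) : EReal) ≤ min ((t : EReal) - P.L t) (P.R t - t) := by
  rw [DRL, if_neg ht]
  split_ifs with hcloser
  · have hL : P.L t ≠ ⊥ := by
      rintro hL
      rw [hL, EReal.coe_sub_bot] at hcloser
      exact not_top_lt hcloser
    obtain ⟨a, hLa, ha, hat⟩ := P.exists_L_eq_coe hL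
    rw [hLa] at hcloser ⊢
    rw [EReal.toReal_coe, abs_of_pos (sub_pos.2 hat), EReal.coe_sub]
    exact ⟨ha, le_min le_rfl hcloser.le⟩
  · have hR : P.R t ≠ ⊤ := by
      refine (P.L_ne_bot_or_R_ne_top hsat ht).elim (fun hL hR => ?_) id
      obtain ⟨a, hLa, -, -⟩ := P.exists_L_eq_coe hL
      rw [hR, hLa, EReal.top_sub_coe, ← EReal.coe_sub] at hcloser
      exact hcloser (EReal.coe_lt_top _)
    obtain ⟨b, hRb, hb, htb⟩ := P.exists_R_eq_coe hR
    rw [hRb] at hcloser ⊢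
    rw [EReal.toReal_coe, abs_sub_comm, abs_of_pos (sub_pos.2 htb), EReal.coe_sub]
    exact ⟨hb, le_min (not_lt.1 hcloser) le_rfl⟩

end SVProblem

end SingleVarDRL

open SingleVarDRL in
/-- Single-variable DRL is optimal (Lemma 1): `DRL t` satisfies `Π` and no value satisfying
`Π` is strictly closer to `t`. -/
theorem stmt_8 (P : SVProblem) (hsat : ∃ s, P.Sat s) (t : ℝ) :
    P.Sat (P.DRL t) ∧ ∀ t' : ℝ, P.Sat t' → ¬ |t - t'| < |t - P.DRL t| := by
  by_cases ht : P.Sat t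
  · simp only [SVProblem.DRL, if_pos ht, sub_self, abs_zero]
    exact ⟨ht, fun _ _ => (abs_nonneg _).not_gt⟩
  obtain ⟨hsat_DRL, hdist⟩ := P.sat_DRL_and_abs_sub_DRL_le hsat ht
  exact ⟨hsat_DRL, fun t' ht' hcloser =>
    (EReal.coe_lt_coe hcloser).not_ge (hdist.trans (P.min_le_abs_sub ht ht'))⟩
end

section
/- Extendibility for disjunctive variable elimination (Lemma 3 of the paper): let Π_i be a finite set of constraints (each a finite disjunction of linear inequalities) over variables x_1,…,x_i. Partition Π_i into Π_i^+ (positive occurrences of x_i only), Π_i^- (negative occurrences only), Π_i^± (both), and constraints without x_i. Define Π_i^{++} as the closure of Π_i^+ under CP resolution on x_i against members of Π_i^± (iterated at most |Π_i^±| times), and define Π_{i-1} as the constraints of Π_i not containing x_i together with all CP-resolvents CPres_i(Ψ, Ψ') with Ψ ∈ Π_i^{++}, Ψ' ∈ Π_i^-. Then: (a) Π_i is satisfiable iff Π_{i-1} is satisfiable, and (b) every assignment to x_1,…,x_{i-1} satisfying Π_{i-1} extends by a value of x_i to an assignment satisfying Π_i. -/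
open scoped Classical

namespace DisjElim

/-- A linear inequality `∑ k, w k * x k + b ≥ 0` over the variables `x_1, …, x_D`. -/
structure Ineq (D : ℕ) where
  w : Fin D → ℝ
  b : ℝ

/-- The value of the linear expression of an inequality at a point. -/
def Ineq.eval {D : ℕ} (ι : Ineq D) (x : Fin D → ℝ) : ℝ := ∑ k, ι.w k * x k + ι.b

/-- A constraint: a finite disjunction of linear inequalities. -/
abbrev Constraint (D : ℕ) := Finset (Ineq D)

/-- `x` satisfies a constraint iff it satisfies some disjunct. -/
def Constraint.Sat {D : ℕ} (C : Constraint D) (x : Fin D → ℝ) : Prop :=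
  ∃ ι ∈ C, ι.eval x ≥ 0

/-- `x` satisfies a set of constraints iff it satisfies every constraint in the set. -/
def SatAll {D : ℕ} (Pi : Finset (Constraint D)) (x : Fin D → ℝ) : Prop :=
  ∀ C ∈ Pi, C.Sat x

/-- The variable `x_i` occurs positively in the constraint. -/
def hasPos {D : ℕ} (i : Fin D) (C : Constraint D) : Prop := ∃ ι ∈ C, 0 < ι.w i

/-- The variable `x_i` occurs negatively in the constraint. -/
def hasNeg {D : ℕ} (i : Fin D) (C : Constraint D) : Prop := ∃ ι ∈ C, ι.w i < 0

/-- The CP resolution rule on `x_i` between `Ψ` (whose positive-occurrence disjuncts are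
resolved) and `Ψ'` (whose negative-occurrence disjuncts are resolved): the disjunction of
all resolvents `φ/w_i(Ψ-part) - φ'/w'_i(Ψ'-part) ≥ 0` together with the remaining
disjuncts `Φ` of `Ψ` and `Φ'` of `Ψ'`. -/
noncomputable def CPres {D : ℕ} (i : Fin D) (Ψ Ψ' : Constraint D) : Constraint D :=
  ((Ψ.filter (fun ι => 0 < ι.w i)) ×ˢ (Ψ'.filter (fun ι => ι.w i < 0))).image
    (fun p => (⟨fun k => p.1.w k / p.1.w i - p.2.w k / p.2.w i,
                p.1.b / p.1.w i - p.2.b / p.2.w i⟩ : Ineq D))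
    ∪ Ψ.filter (fun ι => ¬ 0 < ι.w i) ∪ Ψ'.filter (fun ι => ¬ ι.w i < 0)

/-- `Π_i^+`: constraints with positive and without negative occurrences of `x_i`. -/
noncomputable def posPart {D : ℕ} (i : Fin D) (Pi : Finset (Constraint D)) :
    Finset (Constraint D) :=
  Pi.filter (fun C => hasPos i C ∧ ¬ hasNeg i C)

/-- `Π_i^-`: constraints with negative and without positive occurrences of `x_i`. -/
noncomputable def negPart {D : ℕ} (i : Fin D) (Pi : Finset (Constraint D)) :
    Finset (Constraint D) :=
  Pi.filter (fun C => ¬ hasPos i C ∧ hasNeg i C)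

/-- `Π_i^±`: constraints with both positive and negative occurrences of `x_i`. -/
noncomputable def mixPart {D : ℕ} (i : Fin D) (Pi : Finset (Constraint D)) :
    Finset (Constraint D) :=
  Pi.filter (fun C => hasPos i C ∧ hasNeg i C)

/-- Constraints in which `x_i` does not occur. -/
noncomputable def freePart {D : ℕ} (i : Fin D) (Pi : Finset (Constraint D)) :
    Finset (Constraint D) :=
  Pi.filter (fun C => ¬ hasPos i C ∧ ¬ hasNeg i C)

/-- `Π_i^k`: the `k`-fold CP resolution of `Π_i^+` against the mixed part `Π_i^±`. -/
noncomputable def iterRes {D : ℕ} (i : Fin D) (pm : Finset (Constraint D))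
    (p0 : Finset (Constraint D)) : ℕ → Finset (Constraint D)
  | 0 => p0
  | k + 1 => ((iterRes i pm p0 k) ×ˢ pm).image (fun p => CPres i p.1 p.2)

/-- `Π_i^{++} = ⋃_{k=0}^{|Π_i^±|} Π_i^k`. -/
noncomputable def closurePlus {D : ℕ} (i : Fin D) (Pi : Finset (Constraint D)) :
    Finset (Constraint D) :=
  (Finset.range ((mixPart i Pi).card + 1)).biUnion
    (fun k => iterRes i (mixPart i Pi) (posPart i Pi) k)

/-- One step of disjunctive variable elimination:
`Π_{i-1} = (Π_i` minus all constraints containing `x_i) ∪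
{CPres_i(Ψ, Ψ') : Ψ ∈ Π_i^{++}, Ψ' ∈ Π_i^-}`. -/
noncomputable def elimVar {D : ℕ} (i : Fin D) (Pi : Finset (Constraint D)) :
    Finset (Constraint D) :=
  freePart i Pi ∪ ((closurePlus i Pi) ×ˢ (negPart i Pi)).image (fun p => CPres i p.1 p.2)

end DisjElim

/-
Soundness of CP resolution gives the easy direction. Conversely, fix `x` satisfying `Π_{i-1}`.
An inequality with positive (negative) coefficient of `x_i` holds at `x_i = t` exactly when `t`
is above (below) its root, so a constraint with no satisfied `x_i`-free disjunct holds at `t`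
iff `t ≥ posRoot` or `t ≤ negRoot`. If no `t` meets all these conditions, a Helly-type argument
yields a chain `C₀ ∈ Π⁺`, `C₁, …, C_k ∈ Π^±` with `k ≤ |Π^±|`, `Cₙ ∈ Π⁻`, each `negRoot` below
the preceding `posRoot`. Resolving along the chain gives a member of `Π_{i-1}` (the intermediate
resolvents lie in `Π⁺⁺` because `k ≤ |Π^±|`) all of whose disjuncts are false at `x`.
-/

namespace DisjElim

theorem exists_isChain_of_not_exists_feasible {α : Type*} [DecidableEq α] (lb ub : α → ℝ)
    (N M P : Finset α)
    (h : ¬ ∃ t : ℝ, (∀ C ∈ P, lb C ≤ t) ∧ (∀ C ∈ N, t ≤ ub C) ∧ ∀ C ∈ M, t ≤ ub C ∨ lb C ≤ t) :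
    ∃ C₀ ∈ P, ∃ L : List α, (∀ C ∈ L, C ∈ M) ∧ L.length ≤ M.card ∧
      ∃ Cn ∈ N, (C₀ :: L ++ [Cn]).IsChain (fun A B => ub B < lb A) := by
  induction M using Finset.strongInduction generalizing P with
  | H M ih =>
  -- The constraint `Cs` with the least upper bound lies below some lower bound `lb C₀`; if
  -- `Cs ∈ M` it can then only be met through `lb Cs ≤ t`, so it moves from `M` to `P`.
  obtain ⟨Cs, hCs, hmin⟩ : ∃ Cs ∈ N ∪ M, ∀ C ∈ N ∪ M, ub Cs ≤ ub C := by
    refine Finset.exists_min_image _ ub ((N ∪ M).eq_empty_or_nonempty.resolve_left ?_)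
    intro hNM
    obtain ⟨t, ht⟩ := (P.image lb).bddAbove
    rw [Finset.union_eq_empty] at hNM
    exact h ⟨t, fun C hC => ht (Finset.mem_image_of_mem lb hC), by simp [hNM.1], by simp [hNM.2]⟩
  obtain ⟨C₀, hC₀, hlt⟩ : ∃ C₀ ∈ P, ub Cs < lb C₀ := by
    by_contra! hle
    exact h ⟨ub Cs, hle, fun C hC => hmin C (Finset.mem_union_left _ hC),
      fun C hC => .inl (hmin C (Finset.mem_union_right _ hC))⟩
  rcases Finset.mem_union.1 hCs with hCsN | hCsM
  · exact ⟨C₀, hC₀, [], by simp, by simp, Cs, hCsN, by simpa using hlt⟩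
  have h' : ¬ ∃ t : ℝ, (∀ C ∈ insert Cs P, lb C ≤ t) ∧ (∀ C ∈ N, t ≤ ub C) ∧
      ∀ C ∈ M.erase Cs, t ≤ ub C ∨ lb C ≤ t := by
    rintro ⟨t, hP, hN, hM⟩
    refine h ⟨t, fun C hC => hP C (Finset.mem_insert_of_mem hC), hN, fun C hC => ?_⟩
    rcases eq_or_ne C Cs with rfl | hne
    · exact .inr (hP C (Finset.mem_insert_self _ _))
    · exact hM C (Finset.mem_erase.2 ⟨hne, hC⟩)
  obtain ⟨C₁, hC₁, L, hLM, hlen, Cn, hCn, hchain⟩ := ih _ (Finset.erase_ssubset hCsM) _ h'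
  have hcard : (M.erase Cs).card + 1 = M.card := Finset.card_erase_add_one hCsM
  have hLM' : ∀ C ∈ L, C ∈ M := fun C hC => Finset.mem_of_mem_erase (hLM C hC)
  rcases Finset.mem_insert.1 hC₁ with rfl | hC₁P
  · refine ⟨C₀, hC₀, C₁ :: L, ?_, by simp only [List.length_cons]; omega, Cn, hCn, ?_⟩
    · simpa [hCsM] using hLM'
    · simpa [hlt] using hchain
  · exact ⟨C₁, hC₁P, L, hLM', by omega, Cn, hCn, hchain⟩

variable {D : ℕ}

noncomputable def Ineq.resolvent (i : Fin D) (a b : Ineq D) : Ineq D :=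
  ⟨fun k => a.w k / a.w i - b.w k / b.w i, a.b / a.w i - b.b / b.w i⟩

theorem mem_CPres {i : Fin D} {Ψ Ψ' : Constraint D} {c : Ineq D} :
    c ∈ CPres i Ψ Ψ' ↔
      (∃ a ∈ Ψ, ∃ b ∈ Ψ', 0 < a.w i ∧ b.w i < 0 ∧ a.resolvent i b = c) ∨
      (c ∈ Ψ ∧ ¬ 0 < c.w i) ∨ (c ∈ Ψ' ∧ ¬ c.w i < 0) := by
  simp only [CPres, Finset.mem_union, Finset.mem_image, Finset.mem_product, Finset.mem_filter,
    Prod.exists, or_assoc]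
  unfold Ineq.resolvent
  aesop

theorem Ineq.resolvent_eval (i : Fin D) (a b : Ineq D) (y : Fin D → ℝ) :
    (a.resolvent i b).eval y = a.eval y / a.w i - b.eval y / b.w i := by
  simp only [resolvent, eval, sub_mul, div_mul_eq_mul_div, add_div, Finset.sum_sub_distrib,
    Finset.sum_div]
  ring

theorem Ineq.resolvent_w_self {i : Fin D} {a b : Ineq D} (ha : a.w i ≠ 0) (hb : b.w i ≠ 0) :
    (a.resolvent i b).w i = 0 := by
  simp [resolvent, ha, hb]

theorem Constraint.Sat.CPres {i : Fin D} {Ψ Ψ' : Constraint D} {y : Fin D → ℝ}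
    (h : Ψ.Sat y) (h' : Ψ'.Sat y) : (CPres i Ψ Ψ').Sat y := by
  obtain ⟨a, ha, hay⟩ := h
  obtain ⟨b, hb, hby⟩ := h'
  by_cases hwa : 0 < a.w i
  · by_cases hwb : b.w i < 0
    · refine ⟨a.resolvent i b, mem_CPres.2 (.inl ⟨a, ha, b, hb, hwa, hwb, rfl⟩), ?_⟩
      rw [Ineq.resolvent_eval]
      have : b.eval y / b.w i ≤ 0 := div_nonpos_of_nonneg_of_nonpos hby hwb.le
      linarith [div_nonneg hay hwa.le]
    · exact ⟨b, mem_CPres.2 (.inr (.inr ⟨hb, hwb⟩)), hby⟩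
  · exact ⟨a, mem_CPres.2 (.inr (.inl ⟨ha, hwa⟩)), hay⟩

theorem SatAll.iterRes {i : Fin D} {Pi : Finset (Constraint D)} {y : Fin D → ℝ}
    (hy : SatAll Pi y) (k : ℕ) : SatAll (iterRes i (mixPart i Pi) (posPart i Pi) k) y := by
  induction k with
  | zero => exact fun Ψ hΨ => hy Ψ (Finset.mem_of_mem_filter _ hΨ)
  | succ k ih =>
    simp only [SatAll, DisjElim.iterRes, Finset.forall_mem_image, Finset.mem_product, and_imp,
      Prod.forall]
    exact fun Ψ C hΨ hC => (ih Ψ hΨ).CPres (hy C (Finset.mem_of_mem_filter _ hC))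

theorem SatAll.elimVar {i : Fin D} {Pi : Finset (Constraint D)} {y : Fin D → ℝ}
    (hy : SatAll Pi y) : SatAll (elimVar i Pi) y := by
  simp only [SatAll, DisjElim.elimVar, closurePlus, Finset.forall_mem_union,
    Finset.forall_mem_image, Finset.mem_product, Finset.mem_biUnion, and_imp, Prod.forall,
    forall_exists_index]
  exact ⟨fun C hC => hy C (Finset.mem_of_mem_filter _ hC),
    fun Ψ C k _ hΨ hC => (hy.iterRes k Ψ hΨ).CPres (hy C (Finset.mem_of_mem_filter _ hC))⟩

section Roots

variable (i : Fin D) (x : Fin D → ℝ)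

-- The zero of `t ↦ ι.eval (update x i t)` (junk when `ι.w i = 0`).
noncomputable def Ineq.root (ι : Ineq D) : ℝ := x i - ι.eval x / ι.w i

noncomputable def Constraint.posRoot (C : Constraint D) : ℝ :=
  if h : (C.filter (fun ι => 0 < ι.w i)).Nonempty
  then (C.filter (fun ι => 0 < ι.w i)).inf' h (Ineq.root i x) else 0

noncomputable def Constraint.negRoot (C : Constraint D) : ℝ :=
  if h : (C.filter (fun ι => ι.w i < 0)).Nonempty
  then (C.filter (fun ι => ι.w i < 0)).sup' h (Ineq.root i x) else 0

def Constraint.SatFree (C : Constraint D) : Prop := ∃ ι ∈ C, ι.w i = 0 ∧ 0 ≤ ι.eval x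

variable {i x}

theorem Ineq.eval_update (ι : Ineq D) (t : ℝ) :
    ι.eval (Function.update x i t) = ι.eval x + ι.w i * (t - x i) := by
  have hk : ∀ k, ι.w k * Function.update x i t k
      = ι.w k * x k + if k = i then ι.w i * (t - x i) else 0 := by
    intro k
    rcases eq_or_ne k i with rfl | hk
    · simp only [Function.update_self, if_true]; ring
    · simp [hk]
  simp only [eval, hk, Finset.sum_add_distrib, Finset.sum_ite_eq', Finset.mem_univ, if_true]
  ring

theorem Ineq.eval_update_of_w_eq_zero {ι : Ineq D} (hw : ι.w i = 0) (t : ℝ) :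
    ι.eval (Function.update x i t) = ι.eval x := by
  simp [eval_update, hw]

theorem Ineq.eval_update_eq_mul_sub_root {ι : Ineq D} (hw : ι.w i ≠ 0) (t : ℝ) :
    ι.eval (Function.update x i t) = ι.w i * (t - ι.root i x) := by
  rw [eval_update, root]
  field_simp
  ring

theorem Ineq.eval_update_nonneg_iff_of_pos {ι : Ineq D} (hw : 0 < ι.w i) (t : ℝ) :
    0 ≤ ι.eval (Function.update x i t) ↔ ι.root i x ≤ t := by
  rw [eval_update_eq_mul_sub_root hw.ne', mul_nonneg_iff_of_pos_left hw, sub_nonneg]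

theorem Ineq.eval_update_nonneg_iff_of_neg {ι : Ineq D} (hw : ι.w i < 0) (t : ℝ) :
    0 ≤ ι.eval (Function.update x i t) ↔ t ≤ ι.root i x := by
  rw [eval_update_eq_mul_sub_root hw.ne, ← neg_mul_neg, neg_sub,
    mul_nonneg_iff_of_pos_left (neg_pos.2 hw), sub_nonneg]

theorem Ineq.resolvent_eval_eq_root_sub_root (a b : Ineq D) :
    (a.resolvent i b).eval x = b.root i x - a.root i x := by
  rw [resolvent_eval, root, root]
  ring

namespace Constraint

variable {C : Constraint D} {ι : Ineq D}

theorem posRoot_le (hι : ι ∈ C) (hw : 0 < ι.w i) : C.posRoot i x ≤ ι.root i x := by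
  have hmem : ι ∈ C.filter (fun ι => 0 < ι.w i) := Finset.mem_filter.2 ⟨hι, hw⟩
  rw [posRoot, dif_pos ⟨ι, hmem⟩]
  exact Finset.inf'_le _ hmem

theorem le_negRoot (hι : ι ∈ C) (hw : ι.w i < 0) : ι.root i x ≤ C.negRoot i x := by
  have hmem : ι ∈ C.filter (fun ι => ι.w i < 0) := Finset.mem_filter.2 ⟨hι, hw⟩
  rw [negRoot, dif_pos ⟨ι, hmem⟩]
  exact Finset.le_sup' _ hmem

theorem exists_root_eq_posRoot (h : hasPos i C) :
    ∃ ι ∈ C, 0 < ι.w i ∧ ι.root i x = C.posRoot i x := by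
  obtain ⟨ι, hι, hw⟩ := h
  have hne : (C.filter (fun ι => 0 < ι.w i)).Nonempty := ⟨ι, Finset.mem_filter.2 ⟨hι, hw⟩⟩
  obtain ⟨a, ha, hroot⟩ := Finset.exists_mem_eq_inf' hne (Ineq.root i x)
  obtain ⟨haC, hwa⟩ := Finset.mem_filter.1 ha
  exact ⟨a, haC, hwa, by rw [posRoot, dif_pos hne, hroot]⟩

theorem exists_root_eq_negRoot (h : hasNeg i C) :
    ∃ ι ∈ C, ι.w i < 0 ∧ ι.root i x = C.negRoot i x := by
  obtain ⟨ι, hι, hw⟩ := h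
  have hne : (C.filter (fun ι => ι.w i < 0)).Nonempty := ⟨ι, Finset.mem_filter.2 ⟨hι, hw⟩⟩
  obtain ⟨a, ha, hroot⟩ := Finset.exists_mem_eq_sup' hne (Ineq.root i x)
  obtain ⟨haC, hwa⟩ := Finset.mem_filter.1 ha
  exact ⟨a, haC, hwa, by rw [negRoot, dif_pos hne, hroot]⟩

theorem sat_update_of_satFree (h : C.SatFree i x) (t : ℝ) : C.Sat (Function.update x i t) := by
  obtain ⟨ι, hι, hw, hsat⟩ := h
  exact ⟨ι, hι, by rwa [ge_iff_le, ι.eval_update_of_w_eq_zero hw]⟩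

theorem sat_update_of_posRoot_le (h : hasPos i C) {t : ℝ} (ht : C.posRoot i x ≤ t) :
    C.Sat (Function.update x i t) := by
  obtain ⟨ι, hι, hw, hroot⟩ := exists_root_eq_posRoot (x := x) h
  exact ⟨ι, hι, (ι.eval_update_nonneg_iff_of_pos hw t).2 (hroot ▸ ht)⟩

theorem sat_update_of_le_negRoot (h : hasNeg i C) {t : ℝ} (ht : t ≤ C.negRoot i x) :
    C.Sat (Function.update x i t) := by
  obtain ⟨ι, hι, hw, hroot⟩ := exists_root_eq_negRoot (x := x) h
  exact ⟨ι, hι, (ι.eval_update_nonneg_iff_of_neg hw t).2 (hroot ▸ ht)⟩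

theorem Sat.satFree (h : C.Sat x) (hp : ¬ hasPos i C) (hn : ¬ hasNeg i C) : C.SatFree i x := by
  obtain ⟨ι, hι, hsat⟩ := h
  exact ⟨ι, hι, le_antisymm (not_lt.1 fun h => hp ⟨ι, hι, h⟩)
    (not_lt.1 fun h => hn ⟨ι, hι, h⟩), hsat⟩

end Constraint

end Roots

section Chain

variable {i : Fin D} {x : Fin D → ℝ}

variable (i x) in
def Ineq.ForcesGE (β : ℝ) (ι : Ineq D) : Prop :=
  (ι.w i = 0 ∧ ι.eval x < 0) ∨ (0 < ι.w i ∧ β ≤ ι.root i x)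

theorem Constraint.forcesGE_posRoot {C : Constraint D} (hC : ¬ C.SatFree i x) {ι : Ineq D}
    (hι : ι ∈ C) (hw : ¬ ι.w i < 0) : ι.ForcesGE i x (C.posRoot i x) := by
  rcases (not_lt.1 hw).lt_or_eq with hpos | hzero
  · exact .inr ⟨hpos, posRoot_le hι hpos⟩
  · exact .inl ⟨hzero.symm, not_le.1 fun h => hC ⟨ι, hι, hzero.symm, h⟩⟩

theorem eval_neg_or_mem_of_mem_CPres {Ψ C : Constraint D} {β : ℝ}
    (hΨ : ∀ ι ∈ Ψ, ι.ForcesGE i x β) (hC : C.negRoot i x < β) {c : Ineq D}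
    (hc : c ∈ CPres i Ψ C) : (c.w i = 0 ∧ c.eval x < 0) ∨ (c ∈ C ∧ ¬ c.w i < 0) := by
  rcases mem_CPres.1 hc with ⟨a, ha, b, hb, hwa, hwb, rfl⟩ | ⟨hcΨ, hwc⟩ | hcC
  · refine .inl ⟨Ineq.resolvent_w_self hwa.ne' hwb.ne, ?_⟩
    rw [Ineq.resolvent_eval_eq_root_sub_root]
    rcases hΨ a ha with ⟨hwa', -⟩ | ⟨-, hβ⟩
    · exact absurd hwa' hwa.ne'
    · linarith [Constraint.le_negRoot (x := x) hb hwb]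
  · rcases hΨ c hcΨ with hfalse | ⟨hpos, -⟩
    · exact .inl hfalse
    · exact absurd hpos hwc
  · exact .inr hcC

variable {Pi : Finset (Constraint D)}

theorem CPres_mem_elimVar {k : ℕ} (hk : k ≤ (mixPart i Pi).card) {Ψ C : Constraint D}
    (hΨ : Ψ ∈ iterRes i (mixPart i Pi) (posPart i Pi) k) (hC : C ∈ negPart i Pi) :
    CPres i Ψ C ∈ elimVar i Pi :=
  Finset.mem_union_right _ (Finset.mem_image.2 ⟨(Ψ, C), Finset.mem_product.2
    ⟨Finset.mem_biUnion.2 ⟨k, Finset.mem_range.2 (Nat.lt_succ_of_le hk), hΨ⟩, hC⟩, rfl⟩)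

theorem not_isChain_of_satAll_elimVar (hx : SatAll (elimVar i Pi) x) (L : List (Constraint D))
    (hL : ∀ C ∈ L, C ∈ mixPart i Pi ∧ ¬ C.SatFree i x) {Cn : Constraint D}
    (hCn : Cn ∈ negPart i Pi) (hCn_free : ¬ Cn.SatFree i x) :
    ∀ (k : ℕ) (Ψ A : Constraint D), Ψ ∈ iterRes i (mixPart i Pi) (posPart i Pi) k →
      k + L.length ≤ (mixPart i Pi).card → (∀ ι ∈ Ψ, ι.ForcesGE i x (A.posRoot i x)) →
      ¬ (A :: L ++ [Cn]).IsChain (fun A B => B.negRoot i x < A.posRoot i x) := by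
  induction L with
  | nil =>
    intro k Ψ A hΨ hk hforces hchain
    have hCnA : Cn.negRoot i x < A.posRoot i x := by simpa using hchain
    obtain ⟨c, hc, hsat⟩ := hx _ (CPres_mem_elimVar (by simpa using hk) hΨ hCn)
    rcases eval_neg_or_mem_of_mem_CPres hforces hCnA hc with ⟨-, hneg⟩ | ⟨hcCn, hwc⟩
    · exact absurd hsat (not_le.2 hneg)
    · have hwc0 : c.w i = 0 :=
        le_antisymm (not_lt.1 fun h => (Finset.mem_filter.1 hCn).2.1 ⟨c, hcCn, h⟩) (not_lt.1 hwc)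
      exact hCn_free ⟨c, hcCn, hwc0, hsat⟩
  | cons C L ih =>
    intro k Ψ A hΨ hk hforces hchain
    simp only [List.cons_append, List.isChain_cons_cons] at hchain
    obtain ⟨hCM, hC_free⟩ := hL C List.mem_cons_self
    refine ih (fun C' hC' => hL C' (List.mem_cons_of_mem _ hC')) (k + 1) (CPres i Ψ C) C
      (Finset.mem_image.2 ⟨(Ψ, C), Finset.mem_product.2 ⟨hΨ, hCM⟩, rfl⟩)
      (by simp only [List.length_cons] at hk; omega) (fun c hc => ?_) hchain.2
    rcases eval_neg_or_mem_of_mem_CPres hforces hchain.1 hc with hfalse | ⟨hcC, hwc⟩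
    · exact .inl hfalse
    · exact Constraint.forcesGE_posRoot hC_free hcC hwc

theorem exists_update_satAll_of_satAll_elimVar (hx : SatAll (elimVar i Pi) x) :
    ∃ t : ℝ, SatAll Pi (Function.update x i t) := by
  let active (S : Finset (Constraint D)) := S.filter (fun C => ¬ C.SatFree i x)
  obtain ⟨t, hP, hN, hM⟩ : ∃ t : ℝ, (∀ C ∈ active (posPart i Pi), C.posRoot i x ≤ t) ∧
      (∀ C ∈ active (negPart i Pi), t ≤ C.negRoot i x) ∧
      ∀ C ∈ active (mixPart i Pi), t ≤ C.negRoot i x ∨ C.posRoot i x ≤ t := by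
    by_contra h
    obtain ⟨C₀, hC₀, L, hLM, hlen, Cn, hCn, hchain⟩ :=
      exists_isChain_of_not_exists_feasible _ _ _ _ _ h
    obtain ⟨hC₀P, hC₀_free⟩ := Finset.mem_filter.1 hC₀
    obtain ⟨hCnN, hCn_free⟩ := Finset.mem_filter.1 hCn
    refine not_isChain_of_satAll_elimVar hx L (fun C hC => Finset.mem_filter.1 (hLM C hC))
      hCnN hCn_free 0 C₀ C₀ hC₀P ?_ (fun ι hι => ?_) hchain
    · simpa using hlen.trans (Finset.card_filter_le _ _)
    · exact Constraint.forcesGE_posRoot hC₀_free hι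
        fun hw => (Finset.mem_filter.1 hC₀P).2.2 ⟨ι, hι, hw⟩
  refine ⟨t, fun C hC => ?_⟩
  by_cases hfree : C.SatFree i x
  · exact C.sat_update_of_satFree hfree t
  have hact {S : Finset (Constraint D)} (hS : C ∈ S) : C ∈ active S :=
    Finset.mem_filter.2 ⟨hS, hfree⟩
  by_cases hp : hasPos i C <;> by_cases hn : hasNeg i C
  · rcases hM C (hact (Finset.mem_filter.2 ⟨hC, hp, hn⟩)) with ht | ht
    exacts [Constraint.sat_update_of_le_negRoot hn ht, Constraint.sat_update_of_posRoot_le hp ht]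
  · exact Constraint.sat_update_of_posRoot_le hp (hP C (hact (Finset.mem_filter.2 ⟨hC, hp, hn⟩)))
  · exact Constraint.sat_update_of_le_negRoot hn (hN C (hact (Finset.mem_filter.2 ⟨hC, hp, hn⟩)))
  · exact absurd ((hx C (Finset.mem_union_left _ (Finset.mem_filter.2 ⟨hC, hp, hn⟩))).satFree
      hp hn) hfree

end Chain

end DisjElim

open DisjElim in
theorem stmt_12_general {D : ℕ} (i : Fin D) (Pi : Finset (Constraint D)) :
    ((∃ x, SatAll Pi x) ↔ ∃ x, SatAll (elimVar i Pi) x) ∧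
      (∀ x, SatAll (elimVar i Pi) x → ∃ t : ℝ, SatAll Pi (Function.update x i t)) := by
  refine ⟨⟨fun ⟨x, hx⟩ => ⟨x, hx.elimVar⟩, fun ⟨x, hx⟩ => ?_⟩,
    fun x hx => exists_update_satAll_of_satAll_elimVar hx⟩
  obtain ⟨t, ht⟩ := exists_update_satAll_of_satAll_elimVar hx
  exact ⟨_, ht⟩

open DisjElim in
/-- Extendibility for disjunctive variable elimination (Lemma 3): for a finite set `Π` of
constraints over the variables `x_1,…,x_i` (no later variable occurs), `Π` and the
eliminated set `Π_{i-1} = elimVar i Π` are equisatisfiable, and every assignment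
satisfying `Π_{i-1}` extends, by a suitable value of `x_i`, to one satisfying `Π`. -/
theorem stmt_12 {D : ℕ} (i : Fin D) (Pi : Finset (Constraint D))
    (hvars : ∀ C ∈ Pi, ∀ ι ∈ C, ∀ k, i < k → ι.w k = 0) :
    ((∃ x, SatAll Pi x) ↔ ∃ x, SatAll (elimVar i Pi) x) ∧
      (∀ x, SatAll (elimVar i Pi) x → ∃ t : ℝ, SatAll Pi (Function.update x i t)) :=
  stmt_12_general i Pi
end

section
/- Let r, l ∈ ℝ with r ≤ l, and let n ≥ 1 constraints of the form (x ≤ l_j) ∨ (x ≥ r_j) (j = 1,…,n) be given, together with x ≥ r and x ≤ l. Suppose l_1 < r ≤ r_1, l_2 < r_1 ≤ r_2, …, l_n < r_{n-1} ≤ r_n, and l_n ≤ l < r_n. Then the system {x ≥ r, x ≤ l} ∪ {(x ≤ l_j) ∨ (x ≥ r_j) : j} is unsatisfiable, and moreover r_n > l. -/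
/-- Key interval-covering step in the extendibility proof: with `r ≤ l`, `rj 0 = r`, and a
chain `lj j < rj (j-1) ≤ rj j` for `j = 1,…,n` together with `lj n ≤ l < rj n`, the system
`{x ≥ r, x ≤ l} ∪ {(x ≤ lj j) ∨ (x ≥ rj j) : 1 ≤ j ≤ n}` is unsatisfiable, and the derived
constraint `rj n ≤ l` is violated, i.e. `rj n > l`. -/
theorem stmt_13 (n : ℕ) (hn : 1 ≤ n) (r l : ℝ) (hrl : r ≤ l)
    (lj rj : ℕ → ℝ) (hr0 : rj 0 = r)
    (hchain : ∀ j, 1 ≤ j → j ≤ n → lj j < rj (j - 1) ∧ rj (j - 1) ≤ rj j)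
    (hlast : lj n ≤ l ∧ l < rj n) :
    (¬ ∃ t : ℝ, r ≤ t ∧ t ≤ l ∧ ∀ j, 1 ≤ j → j ≤ n → (t ≤ lj j ∨ t ≥ rj j)) ∧
      l < rj n := by
  refine ⟨?_, hlast.2⟩
  rintro ⟨t, htr, htl, hsat⟩
  have key : ∀ j, j ≤ n → rj j ≤ t := by
    intro j
    induction j with
    | zero => intro _; rw [hr0]; exact htr
    | succ k ih =>
      intro hkn
      have hk : rj k ≤ t := ih (Nat.le_of_succ_le hkn)
      have h1 : 1 ≤ k + 1 := Nat.le_add_left 1 k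
      have hc := hchain (k + 1) h1 hkn
      simp only [Nat.add_sub_cancel] at hc
      rcases hsat (k + 1) h1 hkn with h | h
      · linarith [hc.1]
      · exact h
  linarith [key n le_rfl, hlast.2]
end

section
/- Unsatisfiability detection for one variable: a finite set Π of constraints in a single variable x (each a finite disjunction of inequalities w*x + φ ≥ 0, w ≠ 0 or w = 0) is unsatisfiable if and only if the variable-free set Π_0 obtained by the disjunctive Fourier–Motzkin elimination of x contains a constraint all of whose disjuncts are inequalities b ≥ 0 with b < 0 (equivalently, some constraint of Π_0 is false). -/
open scoped Classical

namespace DisjElimAux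
open DisjElim Finset

noncomputable def pt (θ : ℝ) : Fin 1 → ℝ := fun _ => θ

lemma eval_eq (ι : Ineq 1) (x : Fin 1 → ℝ) : ι.eval x = ι.w 0 * x 0 + ι.b := by
  simp [Ineq.eval, Fin.sum_univ_one]

lemma pos_sat {w b θ : ℝ} (hw : 0 < w) : 0 ≤ w * θ + b ↔ -b / w ≤ θ := by
  rw [div_le_iff₀ hw]; constructor <;> intro h <;> nlinarith

lemma neg_sat {w b θ : ℝ} (hw : w < 0) : 0 ≤ w * θ + b ↔ θ ≤ -b / w := by
  rw [le_div_iff_of_neg hw]; constructor <;> intro h <;> nlinarith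

lemma mem_CPres {Ψ Ψ' : Constraint 1} {ι : Ineq 1} :
    ι ∈ CPres 0 Ψ Ψ' ↔
      (∃ p ∈ Ψ, ∃ q ∈ Ψ', 0 < p.w 0 ∧ q.w 0 < 0 ∧
        ι = ⟨fun k => p.w k / p.w 0 - q.w k / q.w 0, p.b / p.w 0 - q.b / q.w 0⟩) ∨
      (ι ∈ Ψ ∧ ¬ 0 < ι.w 0) ∨ (ι ∈ Ψ' ∧ ¬ ι.w 0 < 0) := by
  simp only [CPres, mem_union, mem_image, mem_product, mem_filter, Prod.exists]
  constructor
  · rintro ((⟨p, q, ⟨⟨hp, hpw⟩, hq, hqw⟩, rfl⟩ | h) | h)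
    · exact Or.inl ⟨p, hp, q, hq, hpw, hqw, rfl⟩
    · exact Or.inr (Or.inl h)
    · exact Or.inr (Or.inr h)
  · rintro (⟨p, hp, q, hq, hpw, hqw, rfl⟩ | h | h)
    · exact Or.inl (Or.inl ⟨p, q, ⟨⟨hp, hpw⟩, hq, hqw⟩, rfl⟩)
    · exact Or.inl (Or.inr h)
    · exact Or.inr h

end DisjElimAux
namespace DisjElimAux
open DisjElim Finset

lemma CPres_sound {Ψ Ψ' : Constraint 1} {x : Fin 1 → ℝ}
    (h : Ψ.Sat x) (h' : Ψ'.Sat x) : (CPres 0 Ψ Ψ').Sat x := by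
  obtain ⟨p, hp, hpe⟩ := h
  obtain ⟨q, hq, hqe⟩ := h'
  by_cases hpw : 0 < p.w 0
  · by_cases hqw : q.w 0 < 0
    · refine ⟨_, mem_CPres.mpr (Or.inl ⟨p, hp, q, hq, hpw, hqw, rfl⟩), ?_⟩
      have hev : (⟨fun k => p.w k / p.w 0 - q.w k / q.w 0,
          p.b / p.w 0 - q.b / q.w 0⟩ : Ineq 1).eval x
          = (p.eval x) / p.w 0 - (q.eval x) / q.w 0 := by
        simp only [eval_eq]
        field_simp
        ring
      rw [ge_iff_le, hev]
      have h1 : 0 ≤ (p.eval x) / p.w 0 := div_nonneg hpe hpw.le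
      have h2 : (q.eval x) / q.w 0 ≤ 0 := div_nonpos_of_nonneg_of_nonpos hqe hqw.le
      linarith
    · exact ⟨q, mem_CPres.mpr (Or.inr (Or.inr ⟨hq, hqw⟩)), hqe⟩
  · exact ⟨p, mem_CPres.mpr (Or.inr (Or.inl ⟨hp, hpw⟩)), hpe⟩

lemma iterRes_sound {Pi : Finset (Constraint 1)} {x : Fin 1 → ℝ} (hx : SatAll Pi x) :
    ∀ k, ∀ Ψ ∈ iterRes 0 (mixPart 0 Pi) (posPart 0 Pi) k, Ψ.Sat x := by
  intro k
  induction k with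
  | zero => intro Ψ hΨ; exact hx Ψ (mem_filter.mp hΨ).1
  | succ k ih =>
      intro Ψ hΨ
      simp only [iterRes, mem_image, mem_product, Prod.exists] at hΨ
      obtain ⟨a, b, ⟨ha, hb⟩, rfl⟩ := hΨ
      exact CPres_sound (ih a ha) (hx b (mem_filter.mp hb).1)

lemma iterRes_w_nonneg {Pi : Finset (Constraint 1)} :
    ∀ k, ∀ Ψ ∈ iterRes 0 (mixPart 0 Pi) (posPart 0 Pi) k, ∀ ι ∈ Ψ, 0 ≤ ι.w 0 := by
  intro k
  induction k with
  | zero =>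
      intro Ψ hΨ ι hι
      have := (mem_filter.mp hΨ).2.2
      by_contra hlt
      exact this ⟨ι, hι, lt_of_not_ge hlt⟩
  | succ k ih =>
      intro Ψ hΨ ι hι
      simp only [iterRes, mem_image, mem_product, Prod.exists] at hΨ
      obtain ⟨a, b, ⟨ha, hb⟩, rfl⟩ := hΨ
      rcases mem_CPres.mp hι with ⟨p, hp, q, hq, hpw, hqw, rfl⟩ | ⟨h1, _⟩ | ⟨h1, h2⟩
      · simp [div_self hpw.ne', div_self hqw.ne]
      · exact ih a ha ι h1
      · exact le_of_not_gt h2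

lemma closurePlus_sound {Pi : Finset (Constraint 1)} {x : Fin 1 → ℝ} (hx : SatAll Pi x)
    {Ψ} (hΨ : Ψ ∈ closurePlus 0 Pi) : Ψ.Sat x := by
  obtain ⟨k, _, hk⟩ := mem_biUnion.mp hΨ
  exact iterRes_sound hx k Ψ hk

lemma elim_entails {Pi : Finset (Constraint 1)} {x : Fin 1 → ℝ} (hx : SatAll Pi x)
    {C} (hC : C ∈ elimVar 0 Pi) : C.Sat x := by
  rcases mem_union.mp hC with h | h
  · exact hx C (mem_filter.mp h).1
  · simp only [mem_image, mem_product, Prod.exists] at h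
    obtain ⟨a, b, ⟨ha, hb⟩, rfl⟩ := h
    exact CPres_sound (closurePlus_sound hx ha) (hx b (mem_filter.mp hb).1)

lemma elim_w_zero {Pi : Finset (Constraint 1)} {C} (hC : C ∈ elimVar 0 Pi) :
    ∀ ι ∈ C, ι.w 0 = 0 := by
  intro ι hι
  rcases mem_union.mp hC with h | h
  · obtain ⟨-, hnp, hnn⟩ := mem_filter.mp h
    have h1 : ¬ 0 < ι.w 0 := fun hl => hnp ⟨ι, hι, hl⟩
    have h2 : ¬ ι.w 0 < 0 := fun hl => hnn ⟨ι, hι, hl⟩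
    linarith [le_of_not_gt h1, le_of_not_gt h2]
  · simp only [mem_image, mem_product, Prod.exists] at h
    obtain ⟨a, b, ⟨ha, hb⟩, rfl⟩ := h
    rcases mem_CPres.mp hι with ⟨p, hp, q, hq, hpw, hqw, rfl⟩ | ⟨h1, h2⟩ | ⟨h1, h2⟩
    · simp [div_self hpw.ne', div_self hqw.ne]
    · obtain ⟨k, hkr, hk⟩ := mem_biUnion.mp ha
      exact le_antisymm (le_of_not_gt h2) (iterRes_w_nonneg k a hk ι h1)
    · have hnp := (mem_filter.mp hb).2.1
      have : ¬ 0 < ι.w 0 := fun hl => hnp ⟨ι, h1, hl⟩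
      linarith [le_of_not_gt this, le_of_not_gt h2]

end DisjElimAux
namespace DisjElimAux
open DisjElim Finset

/-- The constraint contains a trivially true constant disjunct. -/
def Triv (C : Constraint 1) : Prop := ∃ ι ∈ C, ι.w 0 = 0 ∧ 0 ≤ ι.b

/-- The constraint is satisfied at `θ` and at every point above `θ`. -/
def HandUp (C : Constraint 1) (θ : ℝ) : Prop :=
  Triv C ∨ ∃ ι ∈ C, 0 < ι.w 0 ∧ -ι.b / ι.w 0 ≤ θ

/-- `Ψ` is semantically equivalent to `x ≥ θ'` for some `θ' ≥ θ`. -/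
def Good (θ : ℝ) (Ψ : Constraint 1) : Prop :=
  (∀ ι ∈ Ψ, 0 ≤ ι.w 0) ∧ (∀ ι ∈ Ψ, ι.w 0 = 0 → ι.b < 0) ∧
  (∀ ι ∈ Ψ, 0 < ι.w 0 → θ ≤ -ι.b / ι.w 0)

noncomputable def tmin (C : Constraint 1) : ℝ :=
  if h : (C.filter (fun ι => 0 < ι.w 0)).Nonempty then
    ((C.filter (fun ι => 0 < ι.w 0)).image (fun ι => -ι.b / ι.w 0)).min'
      (h.image _)
  else 0

lemma tmin_le {C : Constraint 1} {ι : Ineq 1} (hι : ι ∈ C) (hw : 0 < ι.w 0) :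
    tmin C ≤ -ι.b / ι.w 0 := by
  have hne : (C.filter (fun ι => 0 < ι.w 0)).Nonempty := ⟨ι, mem_filter.mpr ⟨hι, hw⟩⟩
  rw [tmin, dif_pos hne]
  exact min'_le _ _ (mem_image_of_mem _ (mem_filter.mpr ⟨hι, hw⟩))

lemma tmin_mem {C : Constraint 1} (h : ∃ ι ∈ C, 0 < ι.w 0) :
    ∃ ι ∈ C, 0 < ι.w 0 ∧ -ι.b / ι.w 0 = tmin C := by
  obtain ⟨ι₀, h₀, hw₀⟩ := h
  have hne : (C.filter (fun ι => 0 < ι.w 0)).Nonempty := ⟨ι₀, mem_filter.mpr ⟨h₀, hw₀⟩⟩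
  have := min'_mem ((C.filter (fun ι => 0 < ι.w 0)).image (fun ι => -ι.b / ι.w 0))
    (hne.image _)
  obtain ⟨ι, hι, hval⟩ := mem_image.mp this
  obtain ⟨hιC, hιw⟩ := mem_filter.mp hι
  refine ⟨ι, hιC, hιw, ?_⟩
  rw [tmin, dif_pos hne, hval]

lemma handup_mono {C : Constraint 1} {θ θ' : ℝ} (h : θ ≤ θ') (hC : HandUp C θ) :
    HandUp C θ' := by
  rcases hC with h1 | ⟨ι, hι, hw, ht⟩
  · exact Or.inl h1
  · exact Or.inr ⟨ι, hι, hw, ht.trans h⟩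

lemma handup_sat {C : Constraint 1} {θ : ℝ} (h : HandUp C θ) : C.Sat (pt θ) := by
  rcases h with ⟨ι, hι, hw, hb⟩ | ⟨ι, hι, hw, ht⟩
  · exact ⟨ι, hι, by rw [ge_iff_le, eval_eq, pt, hw]; simpa using hb⟩
  · exact ⟨ι, hι, by rw [ge_iff_le, eval_eq, pt]; exact (pos_sat hw).mpr ht⟩

lemma negwit_sat {C : Constraint 1} {θ : ℝ}
    (h : ∃ ι ∈ C, ι.w 0 < 0 ∧ θ ≤ -ι.b / ι.w 0) : C.Sat (pt θ) := by
  obtain ⟨ι, hι, hw, ht⟩ := h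
  exact ⟨ι, hι, by rw [ge_iff_le, eval_eq, pt]; exact (neg_sat hw).mpr ht⟩

lemma good_step {θ : ℝ} {Ψ m : Constraint 1} (hG : Good θ Ψ) (hnt : ¬ Triv m)
    (hneg : ∀ ι ∈ m, ι.w 0 < 0 → -ι.b / ι.w 0 < θ) :
    Good (tmin m) (CPres 0 Ψ m) := by
  refine ⟨?_, ?_, ?_⟩
  · intro ι hι
    rcases mem_CPres.mp hι with ⟨p, hp, q, hq, hpw, hqw, rfl⟩ | ⟨h1, _⟩ | ⟨h1, h2⟩
    · simp [div_self hpw.ne', div_self hqw.ne]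
    · exact hG.1 ι h1
    · exact le_of_not_gt h2
  · intro ι hι
    rcases mem_CPres.mp hι with ⟨p, hp, q, hq, hpw, hqw, rfl⟩ | ⟨h1, _⟩ | ⟨h1, h2⟩
    · intro _
      have h1 : θ ≤ -p.b / p.w 0 := hG.2.2 p hp hpw
      have h2 : -q.b / q.w 0 < θ := hneg q hq hqw
      have e1 : p.b / p.w 0 = -(-p.b / p.w 0) := by rw [neg_div, neg_neg]
      have e2 : q.b / q.w 0 = -(-q.b / q.w 0) := by rw [neg_div, neg_neg]
      show p.b / p.w 0 - q.b / q.w 0 < 0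
      rw [e1, e2]; linarith
    · exact hG.2.1 ι h1
    · intro hw0
      by_contra hb
      exact hnt ⟨ι, h1, hw0, le_of_not_gt hb⟩
  · intro ι hι hw
    rcases mem_CPres.mp hι with ⟨p, hp, q, hq, hpw, hqw, rfl⟩ | ⟨h1, h2⟩ | ⟨h1, h2⟩
    · exfalso
      simp only at hw
      rw [div_self hpw.ne', div_self hqw.ne] at hw
      linarith
    · exact absurd hw h2
    · exact tmin_le h1 hw

lemma final_false {θ : ℝ} {Ψ Ψ' : Constraint 1} (hG : Good θ Ψ)
    (hnp : ¬ hasPos 0 Ψ') (hnt : ¬ Triv Ψ')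
    (hneg : ∀ ι ∈ Ψ', ι.w 0 < 0 → -ι.b / ι.w 0 < θ) :
    ∀ ι ∈ CPres 0 Ψ Ψ', ι.b < 0 := by
  intro ι hι
  rcases mem_CPres.mp hι with ⟨p, hp, q, hq, hpw, hqw, rfl⟩ | ⟨h1, h2⟩ | ⟨h1, h2⟩
  · have h1 : θ ≤ -p.b / p.w 0 := hG.2.2 p hp hpw
    have h2 : -q.b / q.w 0 < θ := hneg q hq hqw
    have e1 : p.b / p.w 0 = -(-p.b / p.w 0) := by rw [neg_div, neg_neg]
    have e2 : q.b / q.w 0 = -(-q.b / q.w 0) := by rw [neg_div, neg_neg]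
    show p.b / p.w 0 - q.b / q.w 0 < 0
    rw [e1, e2]; linarith
  · have hw0 : ι.w 0 = 0 := le_antisymm (le_of_not_gt h2) (hG.1 ι h1)
    exact hG.2.1 ι h1 hw0
  · have hw0 : ι.w 0 = 0 := by
      have : ¬ 0 < ι.w 0 := fun hl => hnp ⟨ι, h1, hl⟩
      linarith [le_of_not_gt this, le_of_not_gt h2]
    by_contra hb
    exact hnt ⟨ι, h1, hw0, le_of_not_gt hb⟩

end DisjElimAux
namespace DisjElimAux
open DisjElim Finset

lemma climb {Pi : Finset (Constraint 1)} (hunsat : ¬ ∃ x : Fin 1 → ℝ, SatAll Pi x)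
    (hno : ∀ C ∈ elimVar 0 Pi, ∃ ι ∈ C, 0 ≤ ι.b) :
    ∀ U : Finset (Constraint 1), U ⊆ mixPart 0 Pi →
      ∀ (θ : ℝ) (Ψ : Constraint 1) (k : ℕ),
      Ψ ∈ iterRes 0 (mixPart 0 Pi) (posPart 0 Pi) k →
      k + U.card ≤ (mixPart 0 Pi).card →
      Good θ Ψ →
      (∀ C ∈ posPart 0 Pi, HandUp C θ) →
      (∀ m ∈ mixPart 0 Pi, m ∉ U → HandUp m θ) →
      False := by
  intro U
  induction U using Finset.strongInduction with
  | _ U ih =>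
    intro hUsub θ Ψ k hΨ hk hG hpos hmix
    by_cases hA : ∃ m ∈ U, ¬ HandUp m θ ∧ ∀ ι ∈ m, ι.w 0 < 0 → -ι.b / ι.w 0 < θ
    · -- climb one step higher using a mixed constraint
      obtain ⟨m, hmU, hmH, hmneg⟩ := hA
      have hmmix := hUsub hmU
      obtain ⟨hmPi, hmp, hmn⟩ := mem_filter.mp hmmix
      have hmnt : ¬ Triv m := fun h => hmH (Or.inl h)
      obtain ⟨ι₀, hι₀, hw₀, ht₀⟩ := tmin_mem hmp
      have hθlt : θ < tmin m := by
        rw [← ht₀]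
        by_contra h
        push_neg at h
        exact hmH (Or.inr ⟨ι₀, hι₀, hw₀, h⟩)
      have hG' := good_step hG hmnt hmneg
      have hΨ' : CPres 0 Ψ m ∈ iterRes 0 (mixPart 0 Pi) (posPart 0 Pi) (k + 1) := by
        simp only [iterRes, mem_image, mem_product, Prod.exists]
        exact ⟨Ψ, m, ⟨hΨ, hmmix⟩, rfl⟩
      have hUpos : 0 < U.card := card_pos.mpr ⟨m, hmU⟩
      refine ih (U.erase m) (erase_ssubset hmU) ((erase_subset _ _).trans hUsub)
        (tmin m) (CPres 0 Ψ m) (k + 1) hΨ' ?_ hG' ?_ ?_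
      · rw [card_erase_of_mem hmU]; omega
      · exact fun C hC => handup_mono hθlt.le (hpos C hC)
      · intro m' hm' hnot
        by_cases hm'm : m' = m
        · subst hm'm
          exact Or.inr ⟨ι₀, hι₀, hw₀, le_of_eq ht₀⟩
        · have hm'U : m' ∉ U := fun h => hnot (mem_erase.mpr ⟨hm'm, h⟩)
          exact handup_mono hθlt.le (hmix m' hm' hm'U)
    · push_neg at hA
      by_cases hB1 : ∀ C ∈ negPart 0 Pi, Triv C ∨ ∃ ι ∈ C, ι.w 0 < 0 ∧ θ ≤ -ι.b / ι.w 0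
      · -- everything is satisfied at θ
        refine hunsat ⟨pt θ, fun C hCPi => ?_⟩
        by_cases hp : hasPos 0 C <;> by_cases hn : hasNeg 0 C
        · -- mixed
          have hCmix : C ∈ mixPart 0 Pi := mem_filter.mpr ⟨hCPi, hp, hn⟩
          by_cases hCU : C ∈ U
          · by_cases hH : HandUp C θ
            · exact handup_sat hH
            · exact negwit_sat (hA C hCU hH)
          · exact handup_sat (hmix C hCmix hCU)
        · exact handup_sat (hpos C (mem_filter.mpr ⟨hCPi, hp, hn⟩))
        · rcases hB1 C (mem_filter.mpr ⟨hCPi, hp, hn⟩) with h | h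
          · exact handup_sat (Or.inl h)
          · exact negwit_sat h
        · -- free
          obtain ⟨ι, hι, hb⟩ := hno C (mem_union_left _ (mem_filter.mpr ⟨hCPi, hp, hn⟩))
          have hw : ι.w 0 = 0 := by
            have h1 : ¬ 0 < ι.w 0 := fun hl => hp ⟨ι, hι, hl⟩
            have h2 : ¬ ι.w 0 < 0 := fun hl => hn ⟨ι, hι, hl⟩
            linarith [le_of_not_gt h1, le_of_not_gt h2]
          exact ⟨ι, hι, by rw [ge_iff_le, eval_eq, pt, hw]; simpa using hb⟩
      · -- some negative constraint below: derive a false constraint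
        push_neg at hB1
        obtain ⟨C, hCneg, hCnt, hCneg'⟩ := hB1
        have hnp : ¬ hasPos 0 C := (mem_filter.mp hCneg).2.1
        have hDfalse := final_false hG hnp hCnt hCneg'
        have hΨcl : Ψ ∈ closurePlus 0 Pi :=
          mem_biUnion.mpr ⟨k, mem_range.mpr (by omega), hΨ⟩
        have hD : CPres 0 Ψ C ∈ elimVar 0 Pi :=
          mem_union_right _ (mem_image.mpr ⟨(Ψ, C), mem_product.mpr ⟨hΨcl, hCneg⟩, rfl⟩)
        obtain ⟨ι, hι, hb⟩ := hno _ hD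
        exact absurd hb (not_le.mpr (hDfalse ι hι))

end DisjElimAux
open DisjElimAux DisjElim Finset

open DisjElim in
/-- Unsatisfiability detection for one variable: a finite set `Π` of constraints in a single
variable `x` (disjunctions of `w * x + φ ≥ 0` with `w` arbitrary) is unsatisfiable iff the
variable-free set `Π_0`, obtained by the disjunctive Fourier–Motzkin elimination of `x`,
contains a false constraint, i.e. one all of whose (constant) disjuncts have `b < 0`. -/
theorem stmt_14 (Pi : Finset (Constraint 1)) :
    (¬ ∃ x : Fin 1 → ℝ, SatAll Pi x) ↔
      ∃ C ∈ elimVar (0 : Fin 1) Pi, ∀ ι ∈ C, ι.b < 0 := by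
  constructor
  · intro hunsat
    by_contra hno
    push_neg at hno
    have hno' : ∀ C ∈ elimVar 0 Pi, ∃ ι ∈ C, 0 ≤ ι.b := by
      intro C hC
      obtain ⟨ι, hι, h⟩ := hno C hC
      exact ⟨ι, hι, h⟩
    by_cases hNT : ((posPart 0 Pi).filter (fun C => ¬ Triv C)).Nonempty
    · -- there is a nontrivial positive constraint: start climbing from the largest one
      set NT := (posPart 0 Pi).filter (fun C => ¬ Triv C) with hNTdef
      have hne : (NT.image tmin).Nonempty := hNT.image _
      set θ₀ := (NT.image tmin).max' hne with hθ₀def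
      obtain ⟨C₀, hC₀, hC₀v⟩ := mem_image.mp (max'_mem _ hne)
      obtain ⟨hC₀pos, hC₀nt⟩ := mem_filter.mp hC₀
      have hC₀p : hasPos 0 C₀ := (mem_filter.mp hC₀pos).2.1
      have hC₀n : ¬ hasNeg 0 C₀ := (mem_filter.mp hC₀pos).2.2
      have hGood : Good θ₀ C₀ := by
        refine ⟨?_, ?_, ?_⟩
        · intro ι hι
          by_contra h
          exact hC₀n ⟨ι, hι, lt_of_not_ge h⟩
        · intro ι hι hw
          by_contra h
          exact hC₀nt ⟨ι, hι, hw, le_of_not_gt h⟩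
        · intro ι hι hw
          rw [hθ₀def, ← hC₀v]
          exact tmin_le hι hw
      refine climb hunsat hno' (mixPart 0 Pi) (Finset.Subset.refl _) θ₀ C₀ 0
        (by simpa [iterRes] using hC₀pos) (by omega) hGood ?_ ?_
      · intro C hC
        by_cases hTr : Triv C
        · exact Or.inl hTr
        · have hCp : hasPos 0 C := (mem_filter.mp hC).2.1
          obtain ⟨ι, hι, hw, ht⟩ := tmin_mem hCp
          have hmemNT : C ∈ NT := mem_filter.mpr ⟨hC, hTr⟩
          have : tmin C ≤ θ₀ := le_max' _ _ (mem_image_of_mem _ hmemNT)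
          exact Or.inr ⟨ι, hι, hw, by rw [ht]; exact this⟩
      · intro m hm hnot
        exact absurd hm hnot
    · -- all positive constraints are trivial: a very small point satisfies everything
      set B := Pi.biUnion
        (fun C => (C.filter (fun ι => ι.w 0 < 0)).image (fun ι => -ι.b / ι.w 0)) with hBdef
      set θ := if h : B.Nonempty then B.min' h else 0 with hθdef
      have hθle : ∀ C ∈ Pi, ∀ ι ∈ C, ι.w 0 < 0 → θ ≤ -ι.b / ι.w 0 := by
        intro C hC ι hι hw
        have hmem : -ι.b / ι.w 0 ∈ B :=
          mem_biUnion.mpr ⟨C, hC, mem_image_of_mem _ (mem_filter.mpr ⟨hι, hw⟩)⟩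
        have hBne : B.Nonempty := ⟨_, hmem⟩
        rw [hθdef, dif_pos hBne]
        exact min'_le _ _ hmem
      refine hunsat ⟨pt θ, fun C hCPi => ?_⟩
      by_cases hn : hasNeg 0 C
      · obtain ⟨ι, hι, hw⟩ := hn
        exact negwit_sat ⟨ι, hι, hw, hθle C hCPi ι hι hw⟩
      · by_cases hp : hasPos 0 C
        · have hCpos : C ∈ posPart 0 Pi := mem_filter.mpr ⟨hCPi, hp, hn⟩
          have hTr : Triv C := by
            by_contra h
            exact hNT ⟨C, mem_filter.mpr ⟨hCpos, h⟩⟩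
          exact handup_sat (Or.inl hTr)
        · obtain ⟨ι, hι, hb⟩ := hno' C (mem_union_left _ (mem_filter.mpr ⟨hCPi, hp, hn⟩))
          have hw : ι.w 0 = 0 := by
            have h1 : ¬ 0 < ι.w 0 := fun hl => hp ⟨ι, hι, hl⟩
            have h2 : ¬ ι.w 0 < 0 := fun hl => hn ⟨ι, hι, hl⟩
            linarith [le_of_not_gt h1, le_of_not_gt h2]
          exact ⟨ι, hι, by rw [ge_iff_le, eval_eq, pt, hw]; simpa using hb⟩
  · rintro ⟨C, hC, hb⟩ ⟨x, hx⟩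
    obtain ⟨ι, hι, he⟩ := elim_entails hx hC
    have hw := elim_w_zero hC ι hι
    rw [ge_iff_le, eval_eq, hw] at he
    simp only [zero_mul, zero_add] at he
    exact absurd (hb ι hι) (not_lt.mpr he)
end

section
/- Membership of boundaries in the feasible set implies they are satisfying projections: let Ψ be a single-variable constraint with boundaries l ∈ ℝ (left) and r ∈ ℝ (right), l < r. Then l and r satisfy Ψ, and every t with l < t < r violates Ψ, while every t with t ≤ l or t ≥ r satisfies Ψ. -/
lemma sat_neg {w φ t : ℝ} (hw : w < 0) : w * t + φ ≥ 0 ↔ t ≤ -φ / w := by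
  rw [ge_iff_le, le_div_iff_of_neg hw]
  constructor <;> intro h <;> nlinarith

lemma sat_pos {w φ t : ℝ} (hw : 0 < w) : w * t + φ ≥ 0 ↔ -φ / w ≤ t := by
  rw [ge_iff_le, div_le_iff₀ hw]
  constructor <;> intro h <;> nlinarith

open Finset in
/-- Two-ray structure of a single-variable constraint: if `Ψ` is a finite disjunction of
inequalities `w j * x + φ j ≥ 0` with `w j ≠ 0`, whose left boundary
`l = max {-φ j / w j : w j < 0}` and right boundary `r = min {-φ j / w j : 0 < w j}` are
both attained (finite) and satisfy `l < r`, then `l` and `r` satisfy `Ψ`, every `t` with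
`l < t < r` violates `Ψ`, and every `t` with `t ≤ l` or `t ≥ r` satisfies `Ψ`. -/
theorem stmt_19 (n : ℕ) (w φ : Fin n → ℝ) (hw : ∀ j, w j ≠ 0) (l r : ℝ)
    (hneg : (Finset.univ.filter (fun j => w j < 0)).Nonempty)
    (hpos : (Finset.univ.filter (fun j => 0 < w j)).Nonempty)
    (hl : l = (Finset.univ.filter (fun j => w j < 0)).sup' hneg (fun j => -φ j / w j))
    (hr : r = (Finset.univ.filter (fun j => 0 < w j)).inf' hpos (fun j => -φ j / w j))
    (hlr : l < r) :
    (∃ j, w j * l + φ j ≥ 0) ∧ (∃ j, w j * r + φ j ≥ 0) ∧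
      (∀ t : ℝ, l < t → t < r → ¬ ∃ j, w j * t + φ j ≥ 0) ∧
      (∀ t : ℝ, t ≤ l ∨ t ≥ r → ∃ j, w j * t + φ j ≥ 0) := by
  obtain ⟨j0, hj0mem, hj0⟩ := Finset.exists_mem_eq_sup'
    hneg (fun j => -φ j / w j)
  obtain ⟨j1, hj1mem, hj1⟩ := Finset.exists_mem_eq_inf'
    hpos (fun j => -φ j / w j)
  have hj0neg : w j0 < 0 := (Finset.mem_filter.mp hj0mem).2
  have hj1pos : 0 < w j1 := (Finset.mem_filter.mp hj1mem).2
  have hl' : l = -φ j0 / w j0 := by rw [hl, hj0]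
  have hr' : r = -φ j1 / w j1 := by rw [hr, hj1]
  have sat : ∀ t : ℝ, t ≤ l ∨ t ≥ r → ∃ j, w j * t + φ j ≥ 0 := by
    intro t ht
    rcases ht with h | h
    · exact ⟨j0, (sat_neg hj0neg).mpr (by rw [← hl']; exact h)⟩
    · exact ⟨j1, (sat_pos hj1pos).mpr (by rw [← hr']; exact h)⟩
  refine ⟨sat l (Or.inl le_rfl), sat r (Or.inr le_rfl), ?_, sat⟩
  rintro t hlt htr ⟨j, hj⟩
  rcases lt_or_gt_of_ne (hw j) with hneg' | hpos'
  · have h1 : t ≤ -φ j / w j := (sat_neg hneg').mp hj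
    have h2 : -φ j / w j ≤ l := by
      rw [hl]
      exact Finset.le_sup' (fun j => -φ j / w j) (Finset.mem_filter.mpr ⟨Finset.mem_univ j, hneg'⟩)
    linarith
  · have h1 : -φ j / w j ≤ t := (sat_pos hpos').mp hj
    have h2 : r ≤ -φ j / w j := by
      rw [hr]
      exact Finset.inf'_le (fun j => -φ j / w j) (Finset.mem_filter.mpr ⟨Finset.mem_univ j, hpos'⟩)
    linarith
end
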